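/- Assume strict feasibility (with margin δ), boundedness, and Lipschitz continuity. Let ε ≥ 0, let c1,…,c5 > 0, and let (L, y, z, λ, w) be a feasible point of CMFOMO whose objective value is at most ε. Define α := (1/c2)·(((C_p+1)^{|𝒯|+1} − 2C_p − 1)/C_p²)·√|S|, β_y := (|S||𝒯|(|𝒯|+1)/2)·r_max·(1 + (|𝒯|/δ)·c_max), β_z := |S||A|(|𝒯|² − |𝒯| + 2)·r_max·(1 + (|𝒯|/δ)·c_max), ζ1 := 1/c1 + α·(C_p·β_y + C_r + k·C_c·|𝒯|·r_max/δ), ζ2 := 1/c3 + β_z·α, ζ3 := 1/c4 + α·(k·c_max + C_c·|S||A||𝒯|), ζ4 := 1/c5 + k·α·(|𝒯|·r_max/δ)·(k·c_max + C_c·|S||A||𝒯|). Then for every policy π ∈ Π(L): −ε·√k·(|𝒯|·r_max/δ)·ζ3 ≤ G_opt(π) ≤ ε·[(|𝒯|+1)·ζ1 + ζ2 + ζ4], and 0 ≤ G_fea(π) ≤ ε·ζ3. -/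

import Mathlib

open Finset

namespace CMFG

/-- Membership in the probability simplex on a finite type. -/
def IsSimplex {X : Type*} [Fintype X] (f : X → ℝ) : Prop :=
  (∀ x, 0 ≤ f x) ∧ ∑ x, f x = 1

variable {S A : Type*} [Fintype S] [Fintype A]

/-- A (Markov, randomized) policy: `π t s ∈ Δ(A)` for every time `t` and state `s`. -/
def IsPolicy (π : ℕ → S → A → ℝ) : Prop := ∀ t s, IsSimplex (π t s)

/-- A mean-field flow: `L t ∈ Δ(S × A)` for every time `t`. -/
def IsFlow (L : ℕ → S × A → ℝ) : Prop := ∀ t, IsSimplex (L t)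

/-- The transition data is a Markov kernel: `p t s a m ∈ Δ(S)` whenever `m ∈ Δ(S × A)`. -/
def IsKernel (T : ℕ) (p : ℕ → S → A → (S × A → ℝ) → S → ℝ) : Prop :=
  ∀ t ≤ T, ∀ s a m, IsSimplex m → IsSimplex (p t s a m)

/-- The occupation measure `Ψ(π, L)` of a representative agent using policy `π`
under the mean-field flow `L`. -/
def psi (μ0 : S → ℝ) (p : ℕ → S → A → (S × A → ℝ) → S → ℝ)
    (π : ℕ → S → A → ℝ) (L : ℕ → S × A → ℝ) : ℕ → S × A → ℝ
  | 0 => fun sa => π 0 sa.1 sa.2 * μ0 sa.1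
  | t + 1 => fun sa =>
      π (t + 1) sa.1 sa.2 *
        ∑ sa' : S × A, p t sa'.1 sa'.2 (L t) sa.1 * psi μ0 p π L t sa'

/-- The mean-field flow `Ψ(π)` induced by the policy `π` alone. -/
def psiInd (μ0 : S → ℝ) (p : ℕ → S → A → (S × A → ℝ) → S → ℝ)
    (π : ℕ → S → A → ℝ) : ℕ → S × A → ℝ
  | 0 => fun sa => π 0 sa.1 sa.2 * μ0 sa.1
  | t + 1 => fun sa =>
      π (t + 1) sa.1 sa.2 *
        ∑ sa' : S × A, p t sa'.1 sa'.2 (psiInd μ0 p π t) sa.1 * psiInd μ0 p π t sa'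

/-- Expected cumulative reward `V^π(L)` of policy `π` under the mean-field flow `L`. -/
def V (T : ℕ) (μ0 : S → ℝ) (p : ℕ → S → A → (S × A → ℝ) → S → ℝ)
    (r : ℕ → S → A → (S × A → ℝ) → ℝ) (π : ℕ → S → A → ℝ) (L : ℕ → S × A → ℝ) : ℝ :=
  ∑ t ∈ Finset.range (T + 1), ∑ sa : S × A, r t sa.1 sa.2 (L t) * psi μ0 p π L t sa

/-- Expected cumulative cost `𝒞^π(L) ∈ ℝ^k` of policy `π` under the mean-field flow `L`. -/
def Cost (T k : ℕ) (μ0 : S → ℝ) (p : ℕ → S → A → (S × A → ℝ) → S → ℝ)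
    (c : ℕ → S → A → (S × A → ℝ) → Fin k → ℝ) (π : ℕ → S → A → ℝ)
    (L : ℕ → S × A → ℝ) : Fin k → ℝ :=
  fun i => ∑ t ∈ Finset.range (T + 1), ∑ sa : S × A, c t sa.1 sa.2 (L t) i * psi μ0 p π L t sa

/-- `π` is an optimal policy of the constrained MDP `CMDP(L)` with threshold `γ0`. -/
def IsCMDPOptimal (T k : ℕ) (μ0 : S → ℝ) (p : ℕ → S → A → (S × A → ℝ) → S → ℝ)
    (r : ℕ → S → A → (S × A → ℝ) → ℝ) (c : ℕ → S → A → (S × A → ℝ) → Fin k → ℝ)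
    (γ0 : Fin k → ℝ) (π : ℕ → S → A → ℝ) (L : ℕ → S × A → ℝ) : Prop :=
  IsPolicy π ∧ (∀ i, Cost T k μ0 p c π L i ≤ γ0 i) ∧
    ∀ π', IsPolicy π' → (∀ i, Cost T k μ0 p c π' L i ≤ γ0 i) →
      V T μ0 p r π' L ≤ V T μ0 p r π L

/-- `π` is an optimal policy of the unconstrained MDP `MDP(L)`. -/
def IsMDPOptimal (T : ℕ) (μ0 : S → ℝ) (p : ℕ → S → A → (S × A → ℝ) → S → ℝ)
    (r : ℕ → S → A → (S × A → ℝ) → ℝ) (π : ℕ → S → A → ℝ) (L : ℕ → S × A → ℝ) : Prop :=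
  IsPolicy π ∧ ∀ π', IsPolicy π' → V T μ0 p r π' L ≤ V T μ0 p r π L

/-- `(π, L)` is a Nash equilibrium of the constrained mean-field game (Definition 2.1):
optimality for `CMDP(L)` together with the consistency condition `L = Ψ(π)` on `𝒯`. -/
def IsCMFGNash (T k : ℕ) (μ0 : S → ℝ) (p : ℕ → S → A → (S × A → ℝ) → S → ℝ)
    (r : ℕ → S → A → (S × A → ℝ) → ℝ) (c : ℕ → S → A → (S × A → ℝ) → Fin k → ℝ)
    (γ0 : Fin k → ℝ) (π : ℕ → S → A → ℝ) (L : ℕ → S × A → ℝ) : Prop :=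
  IsCMDPOptimal T k μ0 p r c γ0 π L ∧ ∀ t ≤ T, L t = psiInd μ0 p π t

/-- Strict feasibility (Assumption 3.1) with margin `δ`. -/
def StrictFeasible (T k : ℕ) (μ0 : S → ℝ) (p : ℕ → S → A → (S × A → ℝ) → S → ℝ)
    (c : ℕ → S → A → (S × A → ℝ) → Fin k → ℝ) (γ0 : Fin k → ℝ) (δ : ℝ) : Prop :=
  0 < δ ∧ ∀ L, IsFlow L → ∀ i : Fin k, ∃ π, IsPolicy π ∧
    (∀ j, Cost T k μ0 p c π L j ≤ γ0 j) ∧ Cost T k μ0 p c π L i ≤ γ0 i - δ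

/-- Strengthened strict feasibility (Assumption 5.1) with margin `δ`. -/
def StrongFeasible (T k : ℕ) (μ0 : S → ℝ) (p : ℕ → S → A → (S × A → ℝ) → S → ℝ)
    (c : ℕ → S → A → (S × A → ℝ) → Fin k → ℝ) (γ0 : Fin k → ℝ) (δ : ℝ) : Prop :=
  0 < δ ∧ ∀ L, IsFlow L → ∃ π, IsPolicy π ∧ ∀ i, Cost T k μ0 p c π L i ≤ γ0 i - δ

/-- Continuity (Assumption 3.2): `p`, `r`, `c` are continuous in the mean-field argument. -/
def ContinuousData (T k : ℕ) (p : ℕ → S → A → (S × A → ℝ) → S → ℝ)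
    (r : ℕ → S → A → (S × A → ℝ) → ℝ)
    (c : ℕ → S → A → (S × A → ℝ) → Fin k → ℝ) : Prop :=
  (∀ t ≤ T, ∀ s a, ContinuousOn (fun m : S × A → ℝ => p t s a m) {m | IsSimplex m}) ∧
  (∀ t ≤ T, ∀ s a, ContinuousOn (fun m : S × A → ℝ => r t s a m) {m | IsSimplex m}) ∧
  (∀ t ≤ T, ∀ s a, ContinuousOn (fun m : S × A → ℝ => c t s a m) {m | IsSimplex m})

/-- Boundedness: `0 ≤ r ≤ rmax` and `0 ≤ c ≤ cmax` entrywise on the simplex. -/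
def BoundedData (T k : ℕ) (r : ℕ → S → A → (S × A → ℝ) → ℝ)
    (c : ℕ → S → A → (S × A → ℝ) → Fin k → ℝ) (rmax cmax : ℝ) : Prop :=
  ∀ t ≤ T, ∀ s a m, IsSimplex m →
    (0 ≤ r t s a m ∧ r t s a m ≤ rmax) ∧ ∀ i, 0 ≤ c t s a m i ∧ c t s a m i ≤ cmax

/-- The ℓ¹ norm of a finitely supported real vector. -/
def norm1 {J : Type*} [Fintype J] (v : J → ℝ) : ℝ := ∑ j, |v j|

/-- The ℓ² norm of a finitely supported real vector. -/
noncomputable def norm2 {J : Type*} [Fintype J] (v : J → ℝ) : ℝ :=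
  Real.sqrt (∑ j, (v j) ^ 2)

/-- Lipschitz continuity (Assumption 3.3) of `p`, `r`, `c` in the mean-field argument. -/
def LipschitzData (T k : ℕ) (p : ℕ → S → A → (S × A → ℝ) → S → ℝ)
    (r : ℕ → S → A → (S × A → ℝ) → ℝ)
    (c : ℕ → S → A → (S × A → ℝ) → Fin k → ℝ) (Cp Cr Cc : ℝ) : Prop :=
  0 < Cp ∧ 0 < Cr ∧ 0 < Cc ∧
  ∀ t ≤ T, ∀ m1 m2 : S × A → ℝ, IsSimplex m1 → IsSimplex m2 →
    ((∑ sa : S × A, ∑ s' : S, |p t sa.1 sa.2 m1 s' - p t sa.1 sa.2 m2 s'|) ≤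
        Cp * norm1 (fun sa => m1 sa - m2 sa)) ∧
    ((∑ sa : S × A, |r t sa.1 sa.2 m1 - r t sa.1 sa.2 m2|) ≤
        Cr * norm1 (fun sa => m1 sa - m2 sa)) ∧
    ((∑ sa : S × A, ∑ i, |c t sa.1 sa.2 m1 i - c t sa.1 sa.2 m2 i|) ≤
        Cc * norm1 (fun sa => m1 sa - m2 sa))

/-- Lipschitz continuity of the transition kernels alone. -/
def LipschitzKernel (T : ℕ) (p : ℕ → S → A → (S × A → ℝ) → S → ℝ) (Cp : ℝ) : Prop :=
  0 < Cp ∧ ∀ t ≤ T, ∀ m1 m2 : S × A → ℝ, IsSimplex m1 → IsSimplex m2 →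
    (∑ sa : S × A, ∑ s' : S, |p t sa.1 sa.2 m1 s' - p t sa.1 sa.2 m2 s'|) ≤
      Cp * norm1 (fun sa => m1 sa - m2 sa)

/-- The reward vector `r_L ∈ ℝ^{|S||A||𝒯|}`. -/
def rLvec (T : ℕ) (r : ℕ → S → A → (S × A → ℝ) → ℝ) (L : ℕ → S × A → ℝ) :
    Fin (T + 1) × S × A → ℝ :=
  fun x => r (x.1 : ℕ) x.2.1 x.2.2 (L (x.1 : ℕ))

/-- The cost matrix `c_L ∈ ℝ^{k × |S||A||𝒯|}`. -/
def cLmat (T k : ℕ) (c : ℕ → S → A → (S × A → ℝ) → Fin k → ℝ) (L : ℕ → S × A → ℝ) :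
    Fin k → Fin (T + 1) × S × A → ℝ :=
  fun i x => c (x.1 : ℕ) x.2.1 x.2.2 (L (x.1 : ℕ)) i

/-- The right-hand-side vector `b ∈ ℝ^{|S||𝒯|}`. -/
def bvec (T : ℕ) (μ0 : S → ℝ) : Fin (T + 1) × S → ℝ :=
  fun row => if (row.1 : ℕ) = T then μ0 row.2 else 0

/-- The constraint matrix `A_L ∈ ℝ^{|S||𝒯| × |S||A||𝒯|}`; `A_L d = b` encodes
`Σ_a d_0(s,a) = μ0(s)` and `Σ_a d_{t+1}(s,a) = Σ_{s',a'} p_t(s|s',a',L_t) d_t(s',a')`. -/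
def ALmat [DecidableEq S] (T : ℕ) (p : ℕ → S → A → (S × A → ℝ) → S → ℝ)
    (L : ℕ → S × A → ℝ) : Fin (T + 1) × S → Fin (T + 1) × S × A → ℝ :=
  fun row col =>
    if (row.1 : ℕ) < T then
      (if col.1 = row.1 then p (row.1 : ℕ) col.2.1 col.2.2 (L (row.1 : ℕ)) row.2 else 0) +
        (if (col.1 : ℕ) = (row.1 : ℕ) + 1 ∧ col.2.1 = row.2 then -1 else 0)
    else if (col.1 : ℕ) = 0 ∧ col.2.1 = row.2 then 1 else 0

/-- Matrix–vector product. -/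
def mulVec {I J : Type*} [Fintype J] (M : I → J → ℝ) (v : J → ℝ) : I → ℝ :=
  fun i => ∑ j, M i j * v j

/-- Transposed matrix–vector product `M^⊤ y`. -/
def tmulVec {I J : Type*} [Fintype I] (M : I → J → ℝ) (y : I → ℝ) : J → ℝ :=
  fun j => ∑ i, M i j * y i

/-- Euclidean inner product. -/
def dot {J : Type*} [Fintype J] (u v : J → ℝ) : ℝ := ∑ j, u j * v j

/-- View a vector indexed by `Fin (T+1) × S × A` as a time-indexed family. -/
def toFam (T : ℕ) (d : Fin (T + 1) × S × A → ℝ) : ℕ → S × A → ℝ :=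
  fun t sa => if h : t < T + 1 then d (⟨t, h⟩, sa.1, sa.2) else 0

/-- View a time-indexed family as a vector indexed by `Fin (T+1) × S × A`. -/
def toVec (T : ℕ) (d : ℕ → S × A → ℝ) : Fin (T + 1) × S × A → ℝ :=
  fun x => d (x.1 : ℕ) (x.2.1, x.2.2)

/-- `π ∈ Π(d)`: `π` is a policy inducing the occupation measure `d` wherever
`d` puts positive mass on a state. -/
def InPi (T : ℕ) (d : ℕ → S × A → ℝ) (π : ℕ → S → A → ℝ) : Prop :=
  IsPolicy π ∧ ∀ t ≤ T, ∀ s a, 0 < ∑ a' : A, d t (s, a') →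
    π t s a = d t (s, a) / ∑ a' : A, d t (s, a')

/-- Feasibility for the linear program `LP(L)`. -/
def LPFeasible [DecidableEq S] (T k : ℕ) (μ0 : S → ℝ)
    (p : ℕ → S → A → (S × A → ℝ) → S → ℝ)
    (c : ℕ → S → A → (S × A → ℝ) → Fin k → ℝ) (γ0 : Fin k → ℝ)
    (L : ℕ → S × A → ℝ) (d : Fin (T + 1) × S × A → ℝ) : Prop :=
  mulVec (ALmat T p L) d = bvec T μ0 ∧ (∀ i, dot (cLmat T k c L i) d ≤ γ0 i) ∧ ∀ x, 0 ≤ d x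

/-- Optimality for the linear program `LP(L)` (minimizing `-r_L^⊤ d`). -/
def LPOptimal [DecidableEq S] (T k : ℕ) (μ0 : S → ℝ)
    (p : ℕ → S → A → (S × A → ℝ) → S → ℝ) (r : ℕ → S → A → (S × A → ℝ) → ℝ)
    (c : ℕ → S → A → (S × A → ℝ) → Fin k → ℝ) (γ0 : Fin k → ℝ)
    (L : ℕ → S × A → ℝ) (d : Fin (T + 1) × S × A → ℝ) : Prop :=
  LPFeasible T k μ0 p c γ0 L d ∧
    ∀ d', LPFeasible T k μ0 p c γ0 L d' → dot (rLvec T r L) d' ≤ dot (rLvec T r L) d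

/-- The KKT system `𝒦(L)` associated with `LP(L)`. -/
def KKT [DecidableEq S] (T k : ℕ) (μ0 : S → ℝ)
    (p : ℕ → S → A → (S × A → ℝ) → S → ℝ) (r : ℕ → S → A → (S × A → ℝ) → ℝ)
    (c : ℕ → S → A → (S × A → ℝ) → Fin k → ℝ) (γ0 : Fin k → ℝ) (L : ℕ → S × A → ℝ)
    (d : Fin (T + 1) × S × A → ℝ) (y : Fin (T + 1) × S → ℝ)
    (z : Fin (T + 1) × S × A → ℝ) (lam : Fin k → ℝ) : Prop :=
  (∀ x, -(rLvec T r L x) =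
      tmulVec (ALmat T p L) y x + z x - ∑ i, cLmat T k c L i x * lam i) ∧
  mulVec (ALmat T p L) d = bvec T μ0 ∧
  (∀ i, dot (cLmat T k c L i) d ≤ γ0 i) ∧ (∀ x, 0 ≤ d x) ∧
  (∀ x, 0 ≤ z x) ∧ dot z d = 0 ∧ (∀ i, 0 ≤ lam i) ∧
  (∑ i, lam i * (dot (cLmat T k c L i) d - γ0 i)) = 0

/-- The population-level KKT system `𝒦^p(L)`. -/
def PopKKT [DecidableEq S] (T : ℕ) (μ0 : S → ℝ)
    (p : ℕ → S → A → (S × A → ℝ) → S → ℝ) (r : ℕ → S → A → (S × A → ℝ) → ℝ)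
    (L : ℕ → S × A → ℝ) (d : Fin (T + 1) × S × A → ℝ) (y : Fin (T + 1) × S → ℝ)
    (z : Fin (T + 1) × S × A → ℝ) : Prop :=
  (∀ x, -(rLvec T r L x) = tmulVec (ALmat T p L) y x + z x) ∧
  mulVec (ALmat T p L) d = bvec T μ0 ∧ (∀ x, 0 ≤ d x) ∧ (∀ x, 0 ≤ z x) ∧ dot z d = 0

/-- Bound for the dual variable `y` in CMFOMO. -/
noncomputable def yBound (cardS T : ℕ) (rmax cmax δ : ℝ) : ℝ :=
  (cardS : ℝ) * ((T : ℝ) + 1) * ((T : ℝ) + 2) / 2 * rmax * (1 + ((T : ℝ) + 1) / δ * cmax)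

/-- Bound for the dual variable `z` in CMFOMO. -/
noncomputable def zBound (cardS cardA T : ℕ) (rmax cmax δ : ℝ) : ℝ :=
  (cardS : ℝ) * (cardA : ℝ) * (((T : ℝ) + 1) ^ 2 - ((T : ℝ) + 1) + 2) * rmax *
    (1 + ((T : ℝ) + 1) / δ * cmax)

/-- Bound for the multiplier `λ` in CMFOMO. -/
noncomputable def lamBound (T : ℕ) (rmax δ : ℝ) : ℝ := ((T : ℝ) + 1) * rmax / δ

/-- The feasible region of the CMFOMO optimization problem. -/
noncomputable def CMFOMOFeasible (T k : ℕ) (rmax cmax δ : ℝ) (γ0 : Fin k → ℝ)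
    (Lv : Fin (T + 1) × S × A → ℝ) (y : Fin (T + 1) × S → ℝ)
    (z : Fin (T + 1) × S × A → ℝ) (lam w : Fin k → ℝ) : Prop :=
  (∀ x, 0 ≤ Lv x) ∧ (∀ t : Fin (T + 1), ∑ sa : S × A, Lv (t, sa.1, sa.2) = 1) ∧
  norm1 y ≤ yBound (Fintype.card S) T rmax cmax δ ∧
  (∀ x, 0 ≤ z x) ∧ norm1 z ≤ zBound (Fintype.card S) (Fintype.card A) T rmax cmax δ ∧
  (∀ i, 0 ≤ lam i ∧ lam i ≤ lamBound T rmax δ) ∧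
  (∀ i, 0 ≤ w i ∧ w i ≤ γ0 i)

/-- The CMFOMO objective function. -/
noncomputable def CMFOMOObj [DecidableEq S] (T k : ℕ) (μ0 : S → ℝ)
    (p : ℕ → S → A → (S × A → ℝ) → S → ℝ) (r : ℕ → S → A → (S × A → ℝ) → ℝ)
    (c : ℕ → S → A → (S × A → ℝ) → Fin k → ℝ) (γ0 : Fin k → ℝ)
    (c1 c2 c3 c4 c5 : ℝ) (Lv : Fin (T + 1) × S × A → ℝ) (y : Fin (T + 1) × S → ℝ)
    (z : Fin (T + 1) × S × A → ℝ) (lam w : Fin k → ℝ) : ℝ :=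
  c1 * norm2 (fun x => tmulVec (ALmat T p (toFam T Lv)) y x + z x +
        rLvec T r (toFam T Lv) x - ∑ i, cLmat T k c (toFam T Lv) i x * lam i) +
  c2 * norm2 (fun row => mulVec (ALmat T p (toFam T Lv)) Lv row - bvec T μ0 row) +
  c3 * dot z Lv +
  c4 * norm2 (fun i => γ0 i - dot (cLmat T k c (toFam T Lv) i) Lv - w i) +
  c5 * |∑ i, lam i * (γ0 i - dot (cLmat T k c (toFam T Lv) i) Lv)|

/-- The feasible region of the population-level CMFOMO problem. -/
noncomputable def PopCMFOMOFeasible (T k : ℕ) (rmax : ℝ) (γ0 : Fin k → ℝ)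
    (Lv : Fin (T + 1) × S × A → ℝ) (y : Fin (T + 1) × S → ℝ)
    (z : Fin (T + 1) × S × A → ℝ) (w : Fin k → ℝ) : Prop :=
  (∀ x, 0 ≤ Lv x) ∧ (∀ t : Fin (T + 1), ∑ sa : S × A, Lv (t, sa.1, sa.2) = 1) ∧
  norm1 y ≤ (Fintype.card S : ℝ) * ((T : ℝ) + 1) * ((T : ℝ) + 2) / 2 * rmax ∧
  (∀ x, 0 ≤ z x) ∧
  norm1 z ≤ (Fintype.card S : ℝ) * (Fintype.card A : ℝ) *
      (((T : ℝ) + 1) ^ 2 - ((T : ℝ) + 1) + 2) * rmax ∧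
  (∀ i, 0 ≤ w i ∧ w i ≤ γ0 i)

/-- The population-level CMFOMO objective function. -/
noncomputable def PopCMFOMOObj [DecidableEq S] (T k : ℕ) (μ0 : S → ℝ)
    (p : ℕ → S → A → (S × A → ℝ) → S → ℝ) (r : ℕ → S → A → (S × A → ℝ) → ℝ)
    (cp : ℕ → (S × A → ℝ) → Fin k → ℝ) (γ0 : Fin k → ℝ)
    (c1 c2 c3 c4 : ℝ) (Lv : Fin (T + 1) × S × A → ℝ) (y : Fin (T + 1) × S → ℝ)
    (z : Fin (T + 1) × S × A → ℝ) (w : Fin k → ℝ) : ℝ :=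
  c1 * norm2 (fun x => tmulVec (ALmat T p (toFam T Lv)) y x + z x + rLvec T r (toFam T Lv) x) +
  c2 * norm2 (fun row => mulVec (ALmat T p (toFam T Lv)) Lv row - bvec T μ0 row) +
  c3 * dot z Lv +
  c4 * norm2 (fun i => γ0 i -
    dot (cLmat T k (fun t _ _ m => cp t m) (toFam T Lv) i) Lv - w i)

/-- The optimal value `V*_c(L)` of the constrained MDP `CMDP(L)`. -/
noncomputable def Vstar (T k : ℕ) (μ0 : S → ℝ) (p : ℕ → S → A → (S × A → ℝ) → S → ℝ)
    (r : ℕ → S → A → (S × A → ℝ) → ℝ) (c : ℕ → S → A → (S × A → ℝ) → Fin k → ℝ)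
    (γ0 : Fin k → ℝ) (L : ℕ → S × A → ℝ) : ℝ :=
  sSup {v | ∃ π, IsPolicy π ∧ (∀ i, Cost T k μ0 p c π L i ≤ γ0 i) ∧ v = V T μ0 p r π L}

/-- The optimal value of the unconstrained MDP `MDP(L)`. -/
noncomputable def VstarU (T : ℕ) (μ0 : S → ℝ) (p : ℕ → S → A → (S × A → ℝ) → S → ℝ)
    (r : ℕ → S → A → (S × A → ℝ) → ℝ) (L : ℕ → S × A → ℝ) : ℝ :=
  sSup {v | ∃ π, IsPolicy π ∧ v = V T μ0 p r π L}

/-- The optimality gap `G_opt(π)`. -/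
noncomputable def Gopt (T k : ℕ) (μ0 : S → ℝ) (p : ℕ → S → A → (S × A → ℝ) → S → ℝ)
    (r : ℕ → S → A → (S × A → ℝ) → ℝ) (c : ℕ → S → A → (S × A → ℝ) → Fin k → ℝ)
    (γ0 : Fin k → ℝ) (π : ℕ → S → A → ℝ) : ℝ :=
  Vstar T k μ0 p r c γ0 (psiInd μ0 p π) - V T μ0 p r π (psiInd μ0 p π)

/-- The feasibility gap `G_fea(π)`. -/
noncomputable def Gfea (T k : ℕ) (μ0 : S → ℝ) (p : ℕ → S → A → (S × A → ℝ) → S → ℝ)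
    (c : ℕ → S → A → (S × A → ℝ) → Fin k → ℝ) (γ0 : Fin k → ℝ)
    (π : ℕ → S → A → ℝ) : ℝ :=
  norm2 (fun i : Fin k => min 0 (γ0 i - Cost T k μ0 p c π (psiInd μ0 p π) i))

/-- The population-level optimality gap. -/
noncomputable def GoptPop (T : ℕ) (μ0 : S → ℝ) (p : ℕ → S → A → (S × A → ℝ) → S → ℝ)
    (r : ℕ → S → A → (S × A → ℝ) → ℝ) (π : ℕ → S → A → ℝ) : ℝ :=
  VstarU T μ0 p r (psiInd μ0 p π) - V T μ0 p r π (psiInd μ0 p π)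

/-- The population-level feasibility gap. -/
noncomputable def GfeaPop (T k : ℕ) (μ0 : S → ℝ) (p : ℕ → S → A → (S × A → ℝ) → S → ℝ)
    (cp : ℕ → (S × A → ℝ) → Fin k → ℝ) (γ0 : Fin k → ℝ) (π : ℕ → S → A → ℝ) : ℝ :=
  norm2 (fun i : Fin k =>
    min 0 (γ0 i - ∑ t ∈ Finset.range (T + 1), cp t (psiInd μ0 p π t) i))

section NPlayer

variable [DecidableEq S] [DecidableEq A]

/-- Empirical state-action distribution of `N` players. -/
noncomputable def emp (N : ℕ) (x : Fin N → S × A) : S × A → ℝ :=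
  fun sa => (∑ i, if x i = sa then (1 : ℝ) else 0) / (N : ℝ)

/-- The joint law, at each time `t`, of the state-action profile of the `N` players
under the policy profile `πv`. -/
noncomputable def jointLaw (N : ℕ) (μ0 : S → ℝ) (p : ℕ → S → A → (S × A → ℝ) → S → ℝ)
    (πv : Fin N → ℕ → S → A → ℝ) : ℕ → (Fin N → S × A) → ℝ
  | 0 => fun x => ∏ i, μ0 (x i).1 * πv i 0 (x i).1 (x i).2
  | t + 1 => fun x => ∑ x' : Fin N → S × A, jointLaw N μ0 p πv t x' *
      ∏ i, p t (x' i).1 (x' i).2 (emp N x') (x i).1 * πv i (t + 1) (x i).1 (x i).2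

/-- Expected cumulative reward `V^{(i)}` of player `i` in the `N`-player game. -/
noncomputable def Vplayer (N T : ℕ) (μ0 : S → ℝ) (p : ℕ → S → A → (S × A → ℝ) → S → ℝ)
    (r : ℕ → S → A → (S × A → ℝ) → ℝ) (πv : Fin N → ℕ → S → A → ℝ) (i : Fin N) : ℝ :=
  ∑ t ∈ Finset.range (T + 1), ∑ x : Fin N → S × A,
    jointLaw N μ0 p πv t x * r t (x i).1 (x i).2 (emp N x)

/-- Expected cumulative cost `γ^{(i)}` of player `i` in the `N`-player game. -/
noncomputable def CostPlayer (N T k : ℕ) (μ0 : S → ℝ) (p : ℕ → S → A → (S × A → ℝ) → S → ℝ)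
    (c : ℕ → S → A → (S × A → ℝ) → Fin k → ℝ) (πv : Fin N → ℕ → S → A → ℝ)
    (i : Fin N) : Fin k → ℝ :=
  fun j => ∑ t ∈ Finset.range (T + 1), ∑ x : Fin N → S × A,
    jointLaw N μ0 p πv t x * c t (x i).1 (x i).2 (emp N x) j

/-- Feasibility gap `G_fea^{(i)}` of player `i` in the `N`-player game. -/
noncomputable def GfeaPlayer (N T k : ℕ) (μ0 : S → ℝ)
    (p : ℕ → S → A → (S × A → ℝ) → S → ℝ) (c : ℕ → S → A → (S × A → ℝ) → Fin k → ℝ)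
    (γ0 : Fin k → ℝ) (πv : Fin N → ℕ → S → A → ℝ) (i : Fin N) : ℝ :=
  norm2 (fun j : Fin k => min 0 (γ0 j - CostPlayer N T k μ0 p c πv i j))

/-- `(ε1, ε2)`-Nash equilibrium of the constrained `N`-player game. -/
noncomputable def IsEpsNash (N T k : ℕ) (μ0 : S → ℝ)
    (p : ℕ → S → A → (S × A → ℝ) → S → ℝ) (r : ℕ → S → A → (S × A → ℝ) → ℝ)
    (c : ℕ → S → A → (S × A → ℝ) → Fin k → ℝ) (γ0 : Fin k → ℝ)
    (πv : Fin N → ℕ → S → A → ℝ) (ε1 ε2 : ℝ) : Prop :=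
  ∀ i : Fin N,
    (∀ π', IsPolicy π' →
      GfeaPlayer N T k μ0 p c γ0 (Function.update πv i π') i = 0 →
      Vplayer N T μ0 p r (Function.update πv i π') i ≤ Vplayer N T μ0 p r πv i + ε1) ∧
    GfeaPlayer N T k μ0 p c γ0 πv i ≤ ε2

end NPlayer

section NormLemmas
variable {J : Type*} [Fintype J]

lemma norm2_nn (v : J → ℝ) : 0 ≤ norm2 v := Real.sqrt_nonneg _

lemma norm1_nn (v : J → ℝ) : 0 ≤ norm1 v := Finset.sum_nonneg fun _ _ => abs_nonneg _

lemma abs_le_norm2 (v : J → ℝ) (j : J) : |v j| ≤ norm2 v := by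
  rw [← Real.sqrt_sq_eq_abs]
  exact Real.sqrt_le_sqrt (Finset.single_le_sum (f := fun j => (v j)^2)
    (fun _ _ => sq_nonneg _) (Finset.mem_univ j))

lemma abs_le_norm1 (v : J → ℝ) (j : J) : |v j| ≤ norm1 v :=
  Finset.single_le_sum (f := fun j => |v j|) (fun _ _ => abs_nonneg _) (Finset.mem_univ j)

lemma norm2_mono {u v : J → ℝ} (h : ∀ j, |u j| ≤ |v j|) : norm2 u ≤ norm2 v := by
  apply Real.sqrt_le_sqrt
  apply Finset.sum_le_sum
  intro j _
  have h1 := h j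
  have h2 := abs_nonneg (u j)
  nlinarith [sq_abs (u j), sq_abs (v j)]

lemma abs_dot_le (u v : J → ℝ) : |dot u v| ≤ norm2 u * norm2 v := by
  have h1 : ∀ w₁ w₂ : J → ℝ, dot w₁ w₂ ≤ norm2 w₁ * norm2 w₂ := fun w₁ w₂ =>
    Real.sum_mul_le_sqrt_mul_sqrt _ _ _
  rcases abs_cases (dot u v) with ⟨h, _⟩ | ⟨h, _⟩
  · rw [h]; exact h1 u v
  · rw [h]
    have := h1 (fun j => -u j) v
    have hn : norm2 (fun j => -u j) = norm2 u := by unfold norm2; congr 1; apply Finset.sum_congr rfl; intros; ring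
    have hd : dot (fun j => -u j) v = -dot u v := by
      unfold dot; rw [← Finset.sum_neg_distrib]; apply Finset.sum_congr rfl; intros; ring
    rw [hn, hd] at this; linarith

lemma norm2_add_le (u v : J → ℝ) : norm2 (fun j => u j + v j) ≤ norm2 u + norm2 v := by
  have h1 : dot u v ≤ norm2 u * norm2 v := (le_abs_self _).trans (abs_dot_le u v)
  have h2 : ∑ j, (u j + v j)^2 ≤ (norm2 u + norm2 v)^2 := by
    have e1 : ∑ j, (u j)^2 = (norm2 u)^2 := (Real.sq_sqrt (Finset.sum_nonneg fun _ _ => sq_nonneg _)).symm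
    have e2 : ∑ j, (v j)^2 = (norm2 v)^2 := (Real.sq_sqrt (Finset.sum_nonneg fun _ _ => sq_nonneg _)).symm
    have e3 : ∑ j, (u j + v j)^2 = ∑ j, (u j)^2 + 2 * dot u v + ∑ j, (v j)^2 := by
      unfold dot; rw [Finset.mul_sum, ← Finset.sum_add_distrib, ← Finset.sum_add_distrib]
      apply Finset.sum_congr rfl; intros; ring
    rw [e3, e1, e2]; nlinarith
  calc norm2 (fun j => u j + v j) ≤ Real.sqrt ((norm2 u + norm2 v)^2) := Real.sqrt_le_sqrt h2
  _ = norm2 u + norm2 v := Real.sqrt_sq (add_nonneg (norm2_nn u) (norm2_nn v))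

lemma norm2_le_norm1 (v : J → ℝ) : norm2 v ≤ norm1 v := by
  have h : ∑ j, (v j)^2 ≤ (norm1 v)^2 := by
    have : ∀ j ∈ Finset.univ, (v j)^2 ≤ |v j| * norm1 v := by
      intro j _
      have := abs_le_norm1 v j
      have h2 := abs_nonneg (v j)
      nlinarith [sq_abs (v j)]
    calc ∑ j, (v j)^2 ≤ ∑ j, |v j| * norm1 v := Finset.sum_le_sum this
    _ = (norm1 v)^2 := by rw [← Finset.sum_mul, sq]; rfl
  calc norm2 v ≤ Real.sqrt ((norm1 v)^2) := Real.sqrt_le_sqrt h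
  _ = norm1 v := Real.sqrt_sq (norm1_nn v)

lemma sum_abs_le_sqrt_card (v : J → ℝ) :
    ∑ j, |v j| ≤ Real.sqrt (Fintype.card J) * norm2 v := by
  have := Real.sum_mul_le_sqrt_mul_sqrt (Finset.univ : Finset J) (fun _ => (1:ℝ)) (fun j => |v j|)
  simp only [one_mul, one_pow, Finset.sum_const, Finset.card_univ, nsmul_eq_mul, mul_one] at this
  calc ∑ j, |v j| ≤ Real.sqrt (Fintype.card J) * Real.sqrt (∑ j, |v j|^2) := this
  _ = Real.sqrt (Fintype.card J) * norm2 v := by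
      unfold norm2; congr 2; apply Finset.sum_congr rfl; intros; rw [sq_abs]

end NormLemmas

/-- subgroup of squares bound: for a product index, the sum of abs over one slice. -/
lemma slice_le_norm2 {I J : Type*} [Fintype I] [Fintype J] [DecidableEq I] (e : I × J → ℝ) (i : I) :
    ∑ j, |e (i, j)| ≤ Real.sqrt (Fintype.card J) * norm2 e := by
  have h1 : ∑ j, |e (i, j)| ≤ Real.sqrt (Fintype.card J) * norm2 (fun j => e (i, j)) :=
    sum_abs_le_sqrt_card _
  have h2 : norm2 (fun j => e (i, j)) ≤ norm2 e := by
    apply Real.sqrt_le_sqrt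
    have : ∑ j, (e (i, j))^2 = ∑ x ∈ Finset.univ.filter (fun x : I × J => x.1 = i), (e x)^2 := by
      rw [Finset.sum_filter]
      rw [Fintype.sum_prod_type]
      rw [Finset.sum_eq_single i]
      · simp
      · intro b _ hb; simp [hb]
      · simp
    rw [this]
    exact Finset.sum_le_sum_of_subset_of_nonneg (Finset.filter_subset _ _) (fun _ _ _ => sq_nonneg _)
  calc ∑ j, |e (i, j)| ≤ Real.sqrt (Fintype.card J) * norm2 (fun j => e (i, j)) := h1
  _ ≤ Real.sqrt (Fintype.card J) * norm2 e := by
      apply mul_le_mul_of_nonneg_left h2 (Real.sqrt_nonneg _)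

lemma geom_aux (Cp E : ℝ) (hCp : 0 < Cp) (hE : 0 ≤ E) (T : ℕ) (Δ : ℕ → ℝ)
    (h0 : Δ 0 ≤ E) (hstep : ∀ t, t < T → Δ (t+1) ≤ (Cp+1) * Δ t + E) :
    ∀ t ≤ T, Δ t ≤ E * (((Cp+1)^(t+1) - 1) / Cp) := by
  intro t
  induction t with
  | zero =>
    intro _
    have h1 : (1:ℝ) ≤ Cp + 1 := by linarith
    have : E * 1 ≤ E * (((Cp+1)^(0+1) - 1) / Cp) := by
      apply mul_le_mul_of_nonneg_left _ hE
      rw [pow_one, le_div_iff₀ hCp]; linarith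
    linarith
  | succ t ih =>
    intro ht
    have ht' : t ≤ T := by omega
    have h1 := ih ht'
    have h2 := hstep t (by omega)
    have hpow : (0:ℝ) ≤ (Cp+1)^(t+1) - 1 - Cp := by
      have : (1:ℝ) + (t+1) * Cp ≤ (Cp+1)^(t+1) := by
        have := one_add_mul_le_pow (a := Cp) (by linarith) (t+1)
        calc (1:ℝ) + (t+1) * Cp ≤ 1 + (t+1:ℕ) * Cp := by push_cast; linarith
        _ ≤ (1 + Cp)^(t+1) := this
        _ = (Cp+1)^(t+1) := by ring_nf
      have h3 : (1:ℝ) ≤ (t+1:ℝ) := by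
        have : (0:ℝ) ≤ (t:ℝ) := Nat.cast_nonneg t
        linarith
      nlinarith
    calc Δ (t+1) ≤ (Cp+1) * Δ t + E := h2
    _ ≤ (Cp+1) * (E * (((Cp+1)^(t+1) - 1) / Cp)) + E := by
        have h4 : (0:ℝ) < Cp + 1 := by linarith
        nlinarith
    _ = E * (((Cp+1) * ((Cp+1)^(t+1) - 1) + Cp) / Cp) := by field_simp
    _ = E * (((Cp+1)^(t+2) - 1) / Cp) := by
        congr 2
        have : (Cp+1)^(t+2) = (Cp+1) * (Cp+1)^(t+1) := by ring
        rw [this]; ring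

lemma geom_bound (Cp E : ℝ) (hCp : 0 < Cp) (hE : 0 ≤ E) (T : ℕ) (Δ : ℕ → ℝ)
    (h0 : Δ 0 ≤ E) (hstep : ∀ t, t < T → Δ (t+1) ≤ (Cp+1) * Δ t + E) :
    ∑ t ∈ Finset.range (T+1), Δ t ≤ E * (((Cp+1)^(T+2) - 2*Cp - 1) / Cp^2) := by
  have key := geom_aux Cp E hCp hE T Δ h0 hstep
  have h1 : ∑ t ∈ Finset.range (T+1), Δ t ≤
      ∑ t ∈ Finset.range (T+1), E * (((Cp+1)^(t+1) - 1) / Cp) := by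
    apply Finset.sum_le_sum
    intro t ht
    exact key t (by simpa using Nat.lt_succ_iff.mp (Finset.mem_range.mp ht))
  have hCpne : Cp ≠ 0 := ne_of_gt hCp
  have hne : (Cp+1:ℝ) ≠ 1 := by intro h; linarith
  have hx : ∑ i ∈ Finset.range (T+2), ((Cp+1):ℝ)^i = ((Cp+1)^(T+2) - 1)/Cp := by
    rw [geom_sum_eq hne]; norm_num
  have hsplit : ∑ i ∈ Finset.range (T+2), ((Cp+1):ℝ)^i =
      (∑ t ∈ Finset.range (T+1), ((Cp+1):ℝ)^(t+1)) + 1 := by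
    rw [Finset.sum_range_succ']; simp
  have hgeom : ∑ t ∈ Finset.range (T+1), ((Cp+1):ℝ)^(t+1) =
      ((Cp+1)^(T+2) - (Cp+1)) / Cp := by
    rw [hsplit] at hx
    field_simp at hx ⊢
    linarith
  have h2 : ∑ t ∈ Finset.range (T+1), E * (((Cp+1)^(t+1) - 1)/Cp)
      = E/Cp * ((((Cp+1)^(T+2) - (Cp+1)) / Cp) - (T+1)) := by
    have hterm : ∀ t : ℕ, E * ((((Cp+1):ℝ)^(t+1) - 1)/Cp) = E/Cp * (Cp+1)^(t+1) - E/Cp := by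
      intro t; field_simp
    simp_rw [hterm]
    rw [Finset.sum_sub_distrib, ← Finset.mul_sum, hgeom]
    simp only [Finset.sum_const, Finset.card_range, nsmul_eq_mul]
    push_cast
    ring
  have h3 : E/Cp * ((((Cp+1)^(T+2) - (Cp+1)) / Cp) - (T+1)) ≤
      E * (((Cp+1)^(T+2) - 2*Cp - 1) / Cp^2) := by
    have hLhs : E/Cp * ((((Cp+1)^(T+2) - (Cp+1)) / Cp) - ((T:ℝ)+1)) =
        E * (((Cp+1)^(T+2) - (Cp+1) - ((T:ℝ)+1)*Cp)/Cp^2) := by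
      field_simp
    rw [hLhs]
    apply mul_le_mul_of_nonneg_left _ hE
    apply div_le_div_of_nonneg_right _ (by positivity)
    have hT : (0:ℝ) ≤ (T:ℝ) := Nat.cast_nonneg T
    nlinarith
  calc ∑ t ∈ Finset.range (T+1), Δ t
      ≤ ∑ t ∈ Finset.range (T+1), E * (((Cp+1)^(t+1) - 1) / Cp) := h1
  _ = E/Cp * ((((Cp+1)^(T+2) - (Cp+1)) / Cp) - (T+1)) := h2
  _ ≤ E * (((Cp+1)^(T+2) - 2*Cp - 1) / Cp^2) := h3

section PsiLemmas
variable {S A : Type*} [Fintype S] [Fintype A]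

lemma psi_congr (μ0 : S → ℝ) (p : ℕ → S → A → (S × A → ℝ) → S → ℝ) (π : ℕ → S → A → ℝ) :
    ∀ (t : ℕ) {L1 L2 : ℕ → S × A → ℝ}, (∀ u, u < t → L1 u = L2 u) →
      psi μ0 p π L1 t = psi μ0 p π L2 t
  | 0, L1, L2, _ => rfl
  | (t+1), L1, L2, h => by
      have ih := psi_congr μ0 p π t (L1 := L1) (L2 := L2) (fun u hu => h u (Nat.lt_succ_of_lt hu))
      funext sa
      simp only [psi, ih, h t (Nat.lt_succ_self t)]

lemma psi_self (μ0 : S → ℝ) (p : ℕ → S → A → (S × A → ℝ) → S → ℝ) (π : ℕ → S → A → ℝ) :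
    ∀ t, psi μ0 p π (psiInd μ0 p π) t = psiInd μ0 p π t
  | 0 => rfl
  | (t+1) => by
      funext sa
      simp only [psi, psiInd, psi_self μ0 p π t]

lemma base_simplex {μ0 : S → ℝ} (hμ0 : IsSimplex μ0) {π : ℕ → S → A → ℝ} (hπ : IsPolicy π) :
    IsSimplex (fun sa : S × A => π 0 sa.1 sa.2 * μ0 sa.1) := by
  constructor
  · intro sa; exact mul_nonneg ((hπ 0 sa.1).1 sa.2) (hμ0.1 sa.1)
  · rw [Fintype.sum_prod_type]
    have hs : ∀ s : S, ∑ a : A, π 0 s a * μ0 s = μ0 s := by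
      intro s; rw [← Finset.sum_mul, (hπ 0 s).2, one_mul]
    rw [Finset.sum_congr rfl (fun s _ => hs s)]
    exact hμ0.2

lemma step_simplex {T : ℕ} {p : ℕ → S → A → (S × A → ℝ) → S → ℝ} (hp : IsKernel T p)
    {t : ℕ} (ht : t ≤ T) {m ψ : S × A → ℝ} (hm : IsSimplex m) (hψ : IsSimplex ψ)
    {π : ℕ → S → A → ℝ} (hπ : IsPolicy π) (u : ℕ) :
    IsSimplex (fun sa : S × A => π u sa.1 sa.2 * ∑ sa' : S × A, p t sa'.1 sa'.2 m sa.1 * ψ sa') := by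
  constructor
  · intro sa
    apply mul_nonneg ((hπ u sa.1).1 sa.2)
    apply Finset.sum_nonneg; intro sa' _
    exact mul_nonneg ((hp t ht sa'.1 sa'.2 m hm).1 sa.1) (hψ.1 sa')
  · rw [Fintype.sum_prod_type]
    have hs : ∀ s : S, ∑ a : A, π u s a * (∑ sa' : S × A, p t sa'.1 sa'.2 m s * ψ sa')
        = ∑ sa' : S × A, p t sa'.1 sa'.2 m s * ψ sa' := by
      intro s; rw [← Finset.sum_mul, (hπ u s).2, one_mul]
    rw [Finset.sum_congr rfl (fun s _ => hs s)]
    rw [Finset.sum_comm]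
    have hs2 : ∀ sa' : S × A, ∑ s : S, p t sa'.1 sa'.2 m s * ψ sa' = ψ sa' := by
      intro sa'; rw [← Finset.sum_mul, (hp t ht sa'.1 sa'.2 m hm).2, one_mul]
    rw [Finset.sum_congr rfl (fun sa' _ => hs2 sa')]
    exact hψ.2

lemma psi_simplex {T : ℕ} {μ0 : S → ℝ} {p : ℕ → S → A → (S × A → ℝ) → S → ℝ}
    {π : ℕ → S → A → ℝ} {L : ℕ → S × A → ℝ} (hp : IsKernel T p) (hπ : IsPolicy π)
    (hμ0 : IsSimplex μ0) (hL : ∀ t ≤ T, IsSimplex (L t)) :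
    ∀ t ≤ T, IsSimplex (psi μ0 p π L t) := by
  intro t
  induction t with
  | zero => intro _; exact base_simplex hμ0 hπ
  | succ t ih =>
    intro ht
    have ht' : t ≤ T := by omega
    exact step_simplex hp ht' (hL t ht') (ih ht') hπ (t+1)

lemma psiInd_simplex {T : ℕ} {μ0 : S → ℝ} {p : ℕ → S → A → (S × A → ℝ) → S → ℝ}
    {π : ℕ → S → A → ℝ} (hp : IsKernel T p) (hπ : IsPolicy π) (hμ0 : IsSimplex μ0) :
    ∀ t ≤ T, IsSimplex (psiInd μ0 p π t) := by
  intro t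
  induction t with
  | zero => intro _; exact base_simplex hμ0 hπ
  | succ t ih =>
    intro ht
    have ht' : t ≤ T := by omega
    exact step_simplex hp ht' (ih ht') (ih ht') hπ (t+1)

lemma toVec_toFam {T : ℕ} (d : Fin (T+1) × S × A → ℝ) : toVec T (toFam T d) = d := by
  funext x
  unfold toVec toFam
  rw [dif_pos x.1.isLt]

lemma toFam_nonneg {T : ℕ} {d : Fin (T+1) × S × A → ℝ} (hd : ∀ x, 0 ≤ d x) (t : ℕ) (sa : S × A) :
    0 ≤ toFam T d t sa := by
  unfold toFam; split_ifs; exacts [hd _, le_refl 0]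

lemma sum_fin_prod {T : ℕ} (F : ℕ → S × A → ℝ) :
    ∑ x : Fin (T+1) × S × A, F (x.1 : ℕ) (x.2.1, x.2.2) =
      ∑ t ∈ Finset.range (T+1), ∑ sa : S × A, F t sa := by
  rw [Fintype.sum_prod_type, ← Fin.sum_univ_eq_sum_range (fun t => ∑ sa : S × A, F t sa)]

end PsiLemmas

section ALLemmas
variable {S A : Type*} [Fintype S] [Fintype A] [DecidableEq S]

lemma sum_ite_diag {T : ℕ} (d : Fin (T+1) × S × A → ℝ) (j0 : Fin (T+1)) (X : S × A → ℝ) :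
    ∑ col : Fin (T+1) × S × A, (if col.1 = j0 then X col.2 else 0) * d col
      = ∑ sa : S × A, X sa * d (j0, sa) := by
  rw [Fintype.sum_prod_type, Finset.sum_comm]
  apply Finset.sum_congr rfl
  intro sa _
  have h : ∀ j : Fin (T+1), (if j = j0 then X sa else 0) * d (j, sa)
      = if j = j0 then X sa * d (j, sa) else 0 := by
    intro j; split_ifs <;> ring
  rw [Finset.sum_congr rfl (fun j _ => h j)]
  rw [Finset.sum_ite_eq' Finset.univ j0 (fun j => X sa * d (j, sa))]
  simp

lemma sum_ite_slice {T : ℕ} (d : Fin (T+1) × S × A → ℝ) (n : ℕ) (hn : n < T+1) (s0 : S) (v : ℝ) :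
    ∑ col : Fin (T+1) × S × A, (if (col.1 : ℕ) = n ∧ col.2.1 = s0 then v else 0) * d col
      = v * ∑ a : A, d (⟨n, hn⟩, s0, a) := by
  rw [Fintype.sum_prod_type]
  have hstep1 : ∀ j : Fin (T+1),
      ∑ sa : S × A, (if (j : ℕ) = n ∧ sa.1 = s0 then v else 0) * d (j, sa)
      = if j = (⟨n, hn⟩ : Fin (T+1)) then v * ∑ a : A, d (j, s0, a) else 0 := by
    intro j
    by_cases hj : (j : ℕ) = n
    · have hj' : j = (⟨n, hn⟩ : Fin (T+1)) := Fin.ext hj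
      rw [if_pos hj']
      rw [Fintype.sum_prod_type]
      have inner : ∀ s : S, ∑ a : A, (if (j : ℕ) = n ∧ ((s, a) : S × A).1 = s0 then v else 0) * d (j, s, a)
          = if s = s0 then v * ∑ a : A, d (j, s, a) else 0 := by
        intro s
        by_cases hs : s = s0
        · rw [if_pos hs, Finset.mul_sum]
          apply Finset.sum_congr rfl
          intro a _
          rw [if_pos ⟨hj, hs⟩]
        · rw [if_neg hs]
          apply Finset.sum_eq_zero
          intro a _
          rw [if_neg (fun hc => hs hc.2), zero_mul]
      rw [Finset.sum_congr rfl (fun s _ => inner s)]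
      rw [Finset.sum_ite_eq' Finset.univ s0 (fun s => v * ∑ a : A, d (j, s, a))]
      simp
    · have hj' : j ≠ (⟨n, hn⟩ : Fin (T+1)) := fun hc => hj (by rw [hc])
      rw [if_neg hj']
      apply Finset.sum_eq_zero
      intro sa _
      rw [if_neg (fun hc => hj hc.1), zero_mul]
  rw [Finset.sum_congr rfl (fun j _ => hstep1 j)]
  rw [Finset.sum_ite_eq' Finset.univ (⟨n, hn⟩ : Fin (T+1)) (fun j => v * ∑ a : A, d (j, s0, a))]
  simp

lemma mulVec_AL_lt {T : ℕ} (p : ℕ → S → A → (S × A → ℝ) → S → ℝ) (L : ℕ → S × A → ℝ)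
    (d : Fin (T+1) × S × A → ℝ) (row : Fin (T+1) × S) (hrow : (row.1 : ℕ) < T) :
    mulVec (ALmat T p L) d row =
      (∑ sa : S × A, p (row.1 : ℕ) sa.1 sa.2 (L (row.1 : ℕ)) row.2 * d (row.1, sa.1, sa.2)) -
        ∑ a : A, d (⟨(row.1 : ℕ) + 1, by omega⟩, row.2, a) := by
  unfold mulVec ALmat
  simp only [hrow, if_true]
  rw [Finset.sum_congr rfl (fun col _ => add_mul _ _ (d col))]
  rw [Finset.sum_add_distrib]
  rw [sum_ite_diag d row.1 (fun sa => p (row.1 : ℕ) sa.1 sa.2 (L (row.1 : ℕ)) row.2)]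
  rw [sum_ite_slice d ((row.1 : ℕ) + 1) (by omega) row.2 (-1)]
  ring

lemma mulVec_AL_last {T : ℕ} (p : ℕ → S → A → (S × A → ℝ) → S → ℝ) (L : ℕ → S × A → ℝ)
    (d : Fin (T+1) × S × A → ℝ) (row : Fin (T+1) × S) (hrow : ¬ ((row.1 : ℕ) < T)) :
    mulVec (ALmat T p L) d row = ∑ a : A, d (⟨0, by omega⟩, row.2, a) := by
  unfold mulVec ALmat
  simp only [hrow, if_false]
  rw [sum_ite_slice d 0 (by omega) row.2 1]
  ring

lemma ALmat_congr {T : ℕ} (p : ℕ → S → A → (S × A → ℝ) → S → ℝ) {L1 L2 : ℕ → S × A → ℝ}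
    (h : ∀ t ≤ T, L1 t = L2 t) : ALmat T p L1 = ALmat T p L2 := by
  funext row col
  unfold ALmat
  by_cases hrow : (row.1 : ℕ) < T
  · simp only [hrow, if_true, h (row.1 : ℕ) (by omega)]
  · simp only [hrow, if_false]

end ALLemmas

section OccLemmas
variable {S A : Type*} [Fintype S] [Fintype A] [DecidableEq S]

lemma mulVec_AL_psi {T : ℕ} {μ0 : S → ℝ} {p : ℕ → S → A → (S × A → ℝ) → S → ℝ}
    {π : ℕ → S → A → ℝ} (hπ : IsPolicy π) (L : ℕ → S × A → ℝ) :
    mulVec (ALmat T p L) (toVec T (psi μ0 p π L)) = bvec T μ0 := by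
  funext row
  by_cases hrow : (row.1 : ℕ) < T
  · rw [mulVec_AL_lt p L _ row hrow]
    have h1 : ∀ a : A, toVec T (psi μ0 p π L) (⟨(row.1 : ℕ) + 1, by omega⟩, row.2, a)
        = π ((row.1 : ℕ) + 1) row.2 a *
          ∑ sa' : S × A, p (row.1 : ℕ) sa'.1 sa'.2 (L (row.1 : ℕ)) row.2 * psi μ0 p π L (row.1 : ℕ) sa' := by
      intro a; rfl
    have h2 : ∑ a : A, toVec T (psi μ0 p π L) (⟨(row.1 : ℕ) + 1, by omega⟩, row.2, a)
        = ∑ sa' : S × A, p (row.1 : ℕ) sa'.1 sa'.2 (L (row.1 : ℕ)) row.2 * psi μ0 p π L (row.1 : ℕ) sa' := by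
      rw [Finset.sum_congr rfl (fun a _ => h1 a), ← Finset.sum_mul, (hπ ((row.1:ℕ)+1) row.2).2, one_mul]
    rw [h2]
    have h3 : (∑ sa : S × A, p (row.1 : ℕ) sa.1 sa.2 (L (row.1 : ℕ)) row.2 *
        toVec T (psi μ0 p π L) (row.1, sa.1, sa.2))
        = ∑ sa' : S × A, p (row.1 : ℕ) sa'.1 sa'.2 (L (row.1 : ℕ)) row.2 * psi μ0 p π L (row.1 : ℕ) sa' := by
      apply Finset.sum_congr rfl
      intro sa _; rfl
    rw [h3, sub_self]
    unfold bvec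
    rw [if_neg (by omega)]
  · rw [mulVec_AL_last p L _ row hrow]
    have h1 : ∀ a : A, toVec T (psi μ0 p π L) (⟨0, by omega⟩, row.2, a)
        = π 0 row.2 a * μ0 row.2 := by
      intro a; rfl
    rw [Finset.sum_congr rfl (fun a _ => h1 a), ← Finset.sum_mul, (hπ 0 row.2).2, one_mul]
    unfold bvec
    rw [if_pos (by omega : (row.1 : ℕ) = T)]

open Classical in
noncomputable def polOf (T : ℕ) (d : Fin (T+1) × S × A → ℝ) : ℕ → S → A → ℝ :=
  fun t s a =>
    if 0 < ∑ a' : A, toFam T d t (s, a') then toFam T d t (s, a) / ∑ a' : A, toFam T d t (s, a')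
    else (Fintype.card A : ℝ)⁻¹

lemma polOf_policy {T : ℕ} [Nonempty A] {d : Fin (T+1) × S × A → ℝ} (hd : ∀ x, 0 ≤ d x) :
    IsPolicy (polOf T d) := by
  intro t s
  constructor
  · intro a
    unfold polOf
    split_ifs with h
    · exact div_nonneg (toFam_nonneg hd t (s, a)) (le_of_lt h)
    · positivity
  · unfold polOf
    split_ifs with h
    · rw [← Finset.sum_div, div_self (ne_of_gt h)]
    · rw [Finset.sum_const, Finset.card_univ, nsmul_eq_mul]
      rw [mul_inv_cancel₀]
      exact_mod_cast Fintype.card_ne_zero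

open Classical in
lemma ratio_recon [Nonempty A] {f : A → ℝ} (hf : ∀ a, 0 ≤ f a) {q : ℝ} (hq : ∑ a', f a' = q) (a : A) :
    (if 0 < ∑ a' : A, f a' then f a / ∑ a' : A, f a' else (Fintype.card A : ℝ)⁻¹) * q = f a := by
  by_cases h : 0 < ∑ a' : A, f a'
  · rw [if_pos h, ← hq, div_mul_cancel₀ _ (ne_of_gt h)]
  · rw [if_neg h]
    have h0 : ∑ a' : A, f a' = 0 :=
      le_antisymm (not_lt.mp h) (Finset.sum_nonneg fun _ _ => hf _)
    have hfa : f a = 0 := le_antisymm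
      (h0 ▸ Finset.single_le_sum (fun a _ => hf a) (Finset.mem_univ a)) (hf a)
    rw [← hq, h0, mul_zero, hfa]

lemma polOf_psi {T : ℕ} [Nonempty A] {μ0 : S → ℝ} {p : ℕ → S → A → (S × A → ℝ) → S → ℝ}
    {L : ℕ → S × A → ℝ} {d : Fin (T+1) × S × A → ℝ}
    (hA : mulVec (ALmat T p L) d = bvec T μ0) (hd : ∀ x, 0 ≤ d x) :
    ∀ t, t ≤ T → psi μ0 p (polOf T d) L t = toFam T d t := by
  intro t
  induction t with
  | zero =>
    intro _
    funext sa
    have hrow := congrFun hA (⟨T, Nat.lt_succ_self T⟩, sa.1)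
    rw [mulVec_AL_last p L d _ (by simp)] at hrow
    unfold bvec at hrow
    rw [if_pos rfl] at hrow
    have hq : ∑ a' : A, toFam T d 0 (sa.1, a') = μ0 sa.1 := by
      rw [← hrow]
      apply Finset.sum_congr rfl
      intro a _
      unfold toFam
      rw [dif_pos (by omega : 0 < T + 1)]
    have := ratio_recon (f := fun a' => toFam T d 0 (sa.1, a'))
      (fun a' => toFam_nonneg hd 0 (sa.1, a')) hq sa.2
    show polOf T d 0 sa.1 sa.2 * μ0 sa.1 = toFam T d 0 sa
    exact this
  | succ t ih =>
    intro ht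
    have ht' : t ≤ T := by omega
    have htT : t < T := by omega
    funext sa
    have hrow := congrFun hA (⟨t, by omega⟩, sa.1)
    rw [mulVec_AL_lt p L d _ (by simpa using htT)] at hrow
    unfold bvec at hrow
    rw [if_neg (by simpa using Nat.ne_of_lt htT)] at hrow
    rw [sub_eq_zero] at hrow
    dsimp only at hrow
    have hq : ∑ a' : A, toFam T d (t+1) (sa.1, a') =
        ∑ sa' : S × A, p t sa'.1 sa'.2 (L t) sa.1 * psi μ0 p (polOf T d) L t sa' := by
      rw [ih ht']
      have e1 : ∑ a' : A, toFam T d (t+1) (sa.1, a')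
          = ∑ a : A, d (⟨t + 1, by omega⟩, sa.1, a) := by
        apply Finset.sum_congr rfl
        intro a _
        unfold toFam
        rw [dif_pos (by omega : t + 1 < T + 1)]
      have e2 : ∑ sa' : S × A, p t sa'.1 sa'.2 (L t) sa.1 * toFam T d t sa'
          = ∑ sa' : S × A, p t sa'.1 sa'.2 (L t) sa.1 * d (⟨t, by omega⟩, sa'.1, sa'.2) := by
        apply Finset.sum_congr rfl
        intro sa' _
        unfold toFam
        rw [dif_pos (by omega : t < T + 1)]
      rw [e1, e2]
      exact hrow.symm
    have := ratio_recon (f := fun a' => toFam T d (t+1) (sa.1, a'))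
      (fun a' => toFam_nonneg hd (t+1) (sa.1, a')) hq sa.2
    show polOf T d (t+1) sa.1 sa.2 * _ = toFam T d (t+1) sa
    exact this

lemma V_eq_dot {T : ℕ} (μ0 : S → ℝ) (p : ℕ → S → A → (S × A → ℝ) → S → ℝ)
    (r : ℕ → S → A → (S × A → ℝ) → ℝ) (π : ℕ → S → A → ℝ) (L : ℕ → S × A → ℝ) :
    V T μ0 p r π L = dot (rLvec T r L) (toVec T (psi μ0 p π L)) := by
  unfold V dot rLvec toVec
  exact (sum_fin_prod (fun t sa => r t sa.1 sa.2 (L t) * psi μ0 p π L t sa)).symm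

lemma Cost_eq_dot {T k : ℕ} (μ0 : S → ℝ) (p : ℕ → S → A → (S × A → ℝ) → S → ℝ)
    (c : ℕ → S → A → (S × A → ℝ) → Fin k → ℝ) (π : ℕ → S → A → ℝ) (L : ℕ → S × A → ℝ)
    (i : Fin k) :
    Cost T k μ0 p c π L i = dot (cLmat T k c L i) (toVec T (psi μ0 p π L)) := by
  unfold Cost dot cLmat toVec
  exact (sum_fin_prod (fun t sa => c t sa.1 sa.2 (L t) i * psi μ0 p π L t sa)).symm

lemma dot_as_sum {T : ℕ} (F : ℕ → S × A → ℝ) (G : ℕ → S × A → ℝ) :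
    dot (fun x : Fin (T+1) × S × A => F (x.1 : ℕ) (x.2.1, x.2.2))
        (fun x => G (x.1 : ℕ) (x.2.1, x.2.2)) =
      ∑ t ∈ Finset.range (T+1), ∑ sa : S × A, F t sa * G t sa := by
  unfold dot
  exact sum_fin_prod (fun t sa => F t sa * G t sa)

lemma dot_tmul {I J : Type*} [Fintype I] [Fintype J] (M : I → J → ℝ) (y : I → ℝ) (v : J → ℝ) :
    dot (tmulVec M y) v = dot y (mulVec M v) := by
  unfold dot tmulVec mulVec
  simp only [Finset.sum_mul, Finset.mul_sum]
  rw [Finset.sum_comm]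
  apply Finset.sum_congr rfl
  intro i _
  apply Finset.sum_congr rfl
  intro j _
  ring

lemma dot_station {T kk : ℕ} (AL : Fin (T+1) × S → Fin (T+1) × S × A → ℝ)
    (rL z : Fin (T+1) × S × A → ℝ) (cL : Fin kk → Fin (T+1) × S × A → ℝ)
    (y : Fin (T+1) × S → ℝ) (lam : Fin kk → ℝ) (v : Fin (T+1) × S × A → ℝ) :
    dot rL v = dot (fun x => tmulVec AL y x + z x + rL x - ∑ i, cL i x * lam i) v
      - dot y (mulVec AL v) - dot z v + ∑ i, lam i * dot (cL i) v := by
  have hA := dot_tmul AL y v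
  have hC : ∑ x, (∑ i, cL i x * lam i) * v x = ∑ i, lam i * dot (cL i) v := by
    unfold dot
    simp only [Finset.sum_mul, Finset.mul_sum]
    rw [Finset.sum_comm]
    apply Finset.sum_congr rfl
    intro i _
    apply Finset.sum_congr rfl
    intro x _
    ring
  unfold dot at *
  simp only [add_mul, sub_mul, Finset.sum_add_distrib, Finset.sum_sub_distrib]
  rw [hC]
  rw [show ∑ x, tmulVec AL y x * v x = ∑ i, y i * mulVec AL v i from hA]
  ring

lemma V_bounds {T k : ℕ} {μ0 : S → ℝ} {p : ℕ → S → A → (S × A → ℝ) → S → ℝ}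
    {r : ℕ → S → A → (S × A → ℝ) → ℝ} {c : ℕ → S → A → (S × A → ℝ) → Fin k → ℝ}
    {rmax cmax : ℝ} {π : ℕ → S → A → ℝ} {L : ℕ → S × A → ℝ}
    (hb : BoundedData T k r c rmax cmax)
    (hL : ∀ t ≤ T, IsSimplex (L t))
    (hψ : ∀ t ≤ T, IsSimplex (psi μ0 p π L t)) :
    0 ≤ V T μ0 p r π L ∧ V T μ0 p r π L ≤ ((T : ℝ) + 1) * rmax := by
  constructor
  · apply Finset.sum_nonneg
    intro t ht
    have ht' : t ≤ T := by simpa using Nat.lt_succ_iff.mp (Finset.mem_range.mp ht)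
    apply Finset.sum_nonneg
    intro sa _
    exact mul_nonneg ((hb t ht' sa.1 sa.2 (L t) (hL t ht')).1.1) ((hψ t ht').1 sa)
  · have h1 : ∀ t ∈ Finset.range (T+1),
        ∑ sa : S × A, r t sa.1 sa.2 (L t) * psi μ0 p π L t sa ≤ rmax := by
      intro t ht
      have ht' : t ≤ T := by simpa using Nat.lt_succ_iff.mp (Finset.mem_range.mp ht)
      calc ∑ sa : S × A, r t sa.1 sa.2 (L t) * psi μ0 p π L t sa
          ≤ ∑ sa : S × A, rmax * psi μ0 p π L t sa := by
            apply Finset.sum_le_sum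
            intro sa _
            exact mul_le_mul_of_nonneg_right ((hb t ht' sa.1 sa.2 (L t) (hL t ht')).1.2)
              ((hψ t ht').1 sa)
      _ = rmax := by rw [← Finset.mul_sum, (hψ t ht').2, mul_one]
    calc V T μ0 p r π L ≤ ∑ t ∈ Finset.range (T+1), rmax := Finset.sum_le_sum h1
    _ = ((T : ℝ) + 1) * rmax := by
        rw [Finset.sum_const, Finset.card_range, nsmul_eq_mul]
        push_cast; ring

end OccLemmas

section MiscLemmas
variable {S A : Type*} [Fintype S] [Fintype A]

lemma toFam_apply {T : ℕ} (d : Fin (T+1) × S × A → ℝ) (x : Fin (T+1) × S × A) :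
    toFam T d (x.1 : ℕ) (x.2.1, x.2.2) = d x := congrFun (toVec_toFam d) x

lemma simplex_le_one {J : Type*} [Fintype J] {f : J → ℝ} (h : IsSimplex f) (j : J) : f j ≤ 1 := by
  rw [← h.2]
  exact Finset.single_le_sum (fun j _ => h.1 j) (Finset.mem_univ j)

lemma norm2_abs {J : Type*} [Fintype J] (v : J → ℝ) : norm2 (fun j => |v j|) = norm2 v := by
  unfold norm2
  congr 1
  apply Finset.sum_congr rfl
  intros j _
  rw [sq_abs]

lemma ratio_abs_sum {π : ℕ → S → A → ℝ} (hπ : IsPolicy π) (t : ℕ) (s : S)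
    {f : A → ℝ} (hf : ∀ a, 0 ≤ f a) {q : ℝ} (hq : 0 ≤ q)
    (hratio : 0 < ∑ a' : A, f a' → ∀ a, π t s a = f a / ∑ a' : A, f a') :
    ∑ a : A, |f a - π t s a * q| = |(∑ a' : A, f a') - q| := by
  have key : ∀ a : A, |f a - π t s a * q| = π t s a * |(∑ a' : A, f a') - q| := by
    intro a
    by_cases hM : 0 < ∑ a' : A, f a'
    · have hfa : f a = π t s a * (∑ a' : A, f a') := by
        rw [hratio hM a, div_mul_cancel₀ _ (ne_of_gt hM)]
      rw [hfa, ← mul_sub, abs_mul, abs_of_nonneg ((hπ t s).1 a)]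
    · have h0 : ∑ a' : A, f a' = 0 :=
        le_antisymm (not_lt.mp hM) (Finset.sum_nonneg fun _ _ => hf _)
      have hfa : f a = 0 := le_antisymm
        (h0 ▸ Finset.single_le_sum (fun a _ => hf a) (Finset.mem_univ a)) (hf a)
      rw [hfa, h0, zero_sub, zero_sub, abs_neg, abs_neg, abs_mul,
        abs_of_nonneg ((hπ t s).1 a), abs_of_nonneg hq]
  rw [Finset.sum_congr rfl (fun a _ => key a), ← Finset.sum_mul, (hπ t s).2, one_mul]

lemma sum_comb {J K : Type*} [Fintype J] [Fintype K] (w : J → ℝ) (a b : ℝ)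
    (u : J → ℝ) (f : K → ℝ) (g : K → J → ℝ) :
    ∑ j, w j * (a * u j + b * ∑ i, f i * g i j)
      = a * ∑ j, w j * u j + b * ∑ i, f i * ∑ j, w j * g i j := by
  have h1 : ∀ j, w j * (a * u j + b * ∑ i, f i * g i j)
      = a * (w j * u j) + ∑ i, b * (f i * (w j * g i j)) := by
    intro j
    have e : (w j * b) * ∑ i, f i * g i j = ∑ i, b * (f i * (w j * g i j)) := by
      rw [Finset.mul_sum]
      apply Finset.sum_congr rfl; intros; ring
    calc w j * (a * u j + b * ∑ i, f i * g i j)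
        = a * (w j * u j) + (w j * b) * ∑ i, f i * g i j := by ring
    _ = a * (w j * u j) + ∑ i, b * (f i * (w j * g i j)) := by rw [e]
  rw [Finset.sum_congr rfl (fun j _ => h1 j), Finset.sum_add_distrib, ← Finset.mul_sum]
  congr 1
  have h2 : ∀ i, ∑ j, b * (f i * (w j * g i j)) = b * (f i * ∑ j, w j * g i j) := by
    intro i
    rw [Finset.mul_sum, Finset.mul_sum]
    try (apply Finset.sum_congr rfl; intros; ring)
  rw [Finset.sum_comm, Finset.sum_congr rfl (fun i _ => h2 i)]
  try (conv_rhs => rw [Finset.mul_sum])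
  try (apply Finset.sum_congr rfl; intros; ring)

end MiscLemmas



set_option maxHeartbeats 1000000

/-- Theorem 3.4 (Suboptimality of CMFOMO): any feasible point of CMFOMO with objective
value at most `ε` yields, for every `π ∈ Π(L)`, explicit bounds on the optimality gap
`G_opt(π)` and the feasibility gap `G_fea(π)`. -/
theorem cmfomo_suboptimality {S A : Type*} [Fintype S] [Fintype A] [DecidableEq S]
    [Nonempty S] [Nonempty A]
    (T k : ℕ) (μ0 : S → ℝ) (hμ0 : IsSimplex μ0)
    (p : ℕ → S → A → (S × A → ℝ) → S → ℝ) (hp : IsKernel T p)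
    (r : ℕ → S → A → (S × A → ℝ) → ℝ)
    (c : ℕ → S → A → (S × A → ℝ) → Fin k → ℝ) (γ0 : Fin k → ℝ)
    (rmax cmax δ Cp Cr Cc : ℝ)
    (hb : BoundedData T k r c rmax cmax)
    (hfeas : StrictFeasible T k μ0 p c γ0 δ)
    (hlip : LipschitzData T k p r c Cp Cr Cc)
    (ε : ℝ) (hε : 0 ≤ ε)
    (c1 c2 c3 c4 c5 : ℝ) (hc1 : 0 < c1) (hc2 : 0 < c2) (hc3 : 0 < c3)
    (hc4 : 0 < c4) (hc5 : 0 < c5)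
    (Lv : Fin (T + 1) × S × A → ℝ) (y : Fin (T + 1) × S → ℝ)
    (z : Fin (T + 1) × S × A → ℝ) (lam w : Fin k → ℝ)
    (hfea : CMFOMOFeasible T k rmax cmax δ γ0 Lv y z lam w)
    (hobj : CMFOMOObj T k μ0 p r c γ0 c1 c2 c3 c4 c5 Lv y z lam w ≤ ε)
    (α βy βz ζ1 ζ2 ζ3 ζ4 : ℝ)
    (hα : α = 1 / c2 * (((Cp + 1) ^ (T + 2) - 2 * Cp - 1) / Cp ^ 2) *
        Real.sqrt (Fintype.card S))
    (hβy : βy = (Fintype.card S : ℝ) * ((T : ℝ) + 1) * ((T : ℝ) + 2) / 2 * rmax *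
        (1 + ((T : ℝ) + 1) / δ * cmax))
    (hβz : βz = (Fintype.card S : ℝ) * (Fintype.card A : ℝ) *
        (((T : ℝ) + 1) ^ 2 - ((T : ℝ) + 1) + 2) * rmax * (1 + ((T : ℝ) + 1) / δ * cmax))
    (hζ1 : ζ1 = 1 / c1 + α * (Cp * βy + Cr + (k : ℝ) * Cc * ((T : ℝ) + 1) * rmax / δ))
    (hζ2 : ζ2 = 1 / c3 + βz * α)
    (hζ3 : ζ3 = 1 / c4 + α * ((k : ℝ) * cmax +
        Cc * (Fintype.card S : ℝ) * (Fintype.card A : ℝ) * ((T : ℝ) + 1)))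
    (hζ4 : ζ4 = 1 / c5 + (k : ℝ) * α * (((T : ℝ) + 1) * rmax / δ) * ((k : ℝ) * cmax +
        Cc * (Fintype.card S : ℝ) * (Fintype.card A : ℝ) * ((T : ℝ) + 1))) :
    ∀ π, InPi T (toFam T Lv) π →
      (-(ε * Real.sqrt (k : ℝ) * (((T : ℝ) + 1) * rmax / δ) * ζ3) ≤
          Gopt T k μ0 p r c γ0 π ∧
        Gopt T k μ0 p r c γ0 π ≤ ε * (((T : ℝ) + 2) * ζ1 + ζ2 + ζ4)) ∧
      (0 ≤ Gfea T k μ0 p c γ0 π ∧ Gfea T k μ0 p c γ0 π ≤ ε * ζ3) := by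

  intro π hπ
  classical
  obtain ⟨hπpol, hπratio⟩ := hπ
  obtain ⟨hLv0, hLv1, hy, hz0, hz1, hlam, hw⟩ := hfea
  obtain ⟨hδ, hstrict⟩ := hfeas
  obtain ⟨hCp, hCr, hCc, hlips⟩ := hlip
  unfold CMFOMOObj at hobj
  set Lf : ℕ → S × A → ℝ := toFam T Lv with hLfdef
  set Lp : ℕ → S × A → ℝ := psiInd μ0 p π with hLpdef
  set g : Fin (T + 1) × S × A → ℝ := fun x =>
    tmulVec (ALmat T p Lf) y x + z x + rLvec T r Lf x -
      ∑ i, cLmat T k c Lf i x * lam i with hgdef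
  set e : Fin (T + 1) × S → ℝ := fun row =>
    mulVec (ALmat T p Lf) Lv row - bvec T μ0 row with hedef
  set u4 : Fin k → ℝ := fun i => γ0 i - dot (cLmat T k c Lf i) Lv - w i with hu4def
  -- basic numeric facts
  have hT0 : (0:ℝ) ≤ (T:ℝ) := Nat.cast_nonneg T
  have hS1 : (1:ℝ) ≤ (Fintype.card S : ℝ) := by exact_mod_cast Fintype.card_pos
  have hA1 : (1:ℝ) ≤ (Fintype.card A : ℝ) := by exact_mod_cast Fintype.card_pos
  obtain ⟨s0⟩ := (inferInstance : Nonempty S)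
  obtain ⟨a0⟩ := (inferInstance : Nonempty A)
  have hunif : IsSimplex (fun _ : S × A => ((Fintype.card (S × A) : ℝ))⁻¹) := by
    constructor
    · intro _; positivity
    · rw [Finset.sum_const, Finset.card_univ, nsmul_eq_mul, mul_inv_cancel₀]
      exact_mod_cast Fintype.card_ne_zero
  have hrmax : 0 ≤ rmax :=
    le_trans (hb 0 (Nat.zero_le T) s0 a0 _ hunif).1.1 (hb 0 (Nat.zero_le T) s0 a0 _ hunif).1.2
  have hcmax_if : 0 < k → 0 ≤ cmax := by
    intro hk
    have hc := (hb 0 (Nat.zero_le T) s0 a0 _ hunif).2 ⟨0, hk⟩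
    exact le_trans hc.1 hc.2
  have hkcm : 0 ≤ (k:ℝ) * cmax := by
    rcases Nat.eq_zero_or_pos k with hk | hk
    · simp [hk]
    · have := hcmax_if hk
      positivity
  -- simplex facts
  have hLfS : ∀ t, t ≤ T → IsSimplex (Lf t) := by
    intro t ht
    constructor
    · intro sa; exact toFam_nonneg hLv0 t sa
    · have h1 := hLv1 ⟨t, by omega⟩
      calc ∑ sa : S × A, Lf t sa
          = ∑ sa : S × A, Lv (⟨t, by omega⟩, sa.1, sa.2) := by
            apply Finset.sum_congr rfl
            intro sa _
            simp only [hLfdef]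
            unfold toFam
            rw [dif_pos (by omega : t < T + 1)]
      _ = 1 := h1
  have hLpS : ∀ t, t ≤ T → IsSimplex (Lp t) := psiInd_simplex hp hπpol hμ0
  have hψπ : ∀ t, psi μ0 p π Lp t = Lp t := psi_self μ0 p π
  -- objective term extraction
  have hzLv : 0 ≤ dot z Lv := Finset.sum_nonneg fun x _ => mul_nonneg (hz0 x) (hLv0 x)
  have habs5 : 0 ≤ |∑ i, lam i * (γ0 i - dot (cLmat T k c Lf i) Lv)| := abs_nonneg _
  have hng := norm2_nn g
  have hne2 := norm2_nn e
  have hnu4 := norm2_nn u4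
  have hterm1 : norm2 g ≤ ε / c1 := by
    rw [le_div_iff₀ hc1]
    linarith [mul_nonneg hc2.le hne2, mul_nonneg hc4.le hnu4, mul_nonneg hc3.le hzLv,
      mul_nonneg hc5.le habs5]
  have hterm2 : norm2 e ≤ ε / c2 := by
    rw [le_div_iff₀ hc2]
    linarith [mul_nonneg hc1.le hng, mul_nonneg hc4.le hnu4, mul_nonneg hc3.le hzLv,
      mul_nonneg hc5.le habs5]
  have hterm3 : dot z Lv ≤ ε / c3 := by
    rw [le_div_iff₀ hc3]
    linarith [mul_nonneg hc1.le hng, mul_nonneg hc2.le hne2, mul_nonneg hc4.le hnu4,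
      mul_nonneg hc5.le habs5]
  have hterm4 : norm2 u4 ≤ ε / c4 := by
    rw [le_div_iff₀ hc4]
    linarith [mul_nonneg hc1.le hng, mul_nonneg hc2.le hne2, mul_nonneg hc3.le hzLv,
      mul_nonneg hc5.le habs5]
  have hterm5 : |∑ i, lam i * (γ0 i - dot (cLmat T k c Lf i) Lv)| ≤ ε / c5 := by
    rw [le_div_iff₀ hc5]
    linarith [mul_nonneg hc1.le hng, mul_nonneg hc2.le hne2, mul_nonneg hc3.le hzLv,
      mul_nonneg hc4.le hnu4]
  -- flow discrepancy
  set Δ : ℕ → ℝ := fun t => ∑ sa : S × A, |Lf t sa - Lp t sa| with hΔdef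
  set η : ℝ := ∑ t ∈ Finset.range (T+1), Δ t with hηdef
  have hΔnn : ∀ t, 0 ≤ Δ t := fun t => Finset.sum_nonneg fun _ _ => abs_nonneg _
  have hηnn : 0 ≤ η := Finset.sum_nonneg fun _ _ => hΔnn _
  have hΔη : ∀ t, t ≤ T → Δ t ≤ η := by
    intro t ht
    rw [hηdef]
    exact Finset.single_le_sum (f := Δ) (fun u _ => hΔnn u) (Finset.mem_range.mpr (by omega))
  set E : ℝ := Real.sqrt (Fintype.card S) * norm2 e with hEdef
  have hEnn : 0 ≤ E := mul_nonneg (Real.sqrt_nonneg _) hne2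
  have hslice : ∀ j : Fin (T+1), ∑ s : S, |e (j, s)| ≤ E := fun j => slice_le_norm2 e j
  have hLv_eq : ∀ (t : ℕ) (ht : t < T + 1) (s : S) (a : A), Lv (⟨t, ht⟩, s, a) = Lf t (s, a) := by
    intro t ht s a
    simp only [hLfdef]
    unfold toFam
    rw [dif_pos ht]
  have hbase : Δ 0 ≤ E := by
    have hce : ∀ s : S, e (⟨T, Nat.lt_succ_self T⟩, s) = (∑ a : A, Lf 0 (s, a)) - μ0 s := by
      intro s
      simp only [hedef]
      rw [mulVec_AL_last p Lf Lv (⟨T, Nat.lt_succ_self T⟩, s) (by simp)]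
      unfold bvec
      rw [if_pos rfl]
      congr 1
    have hper : ∀ s : S, ∑ a : A, |Lf 0 (s, a) - Lp 0 (s, a)|
        = |e (⟨T, Nat.lt_succ_self T⟩, s)| := by
      intro s
      have h1 := ratio_abs_sum hπpol 0 s (f := fun a => Lf 0 (s, a))
        (fun a => (hLfS 0 (Nat.zero_le T)).1 (s, a)) (hμ0.1 s)
        (fun hpos a => hπratio 0 (Nat.zero_le T) s a hpos)
      calc ∑ a : A, |Lf 0 (s, a) - Lp 0 (s, a)|
          = ∑ a : A, |Lf 0 (s, a) - π 0 s a * μ0 s| := rfl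
      _ = |(∑ a' : A, Lf 0 (s, a')) - μ0 s| := h1
      _ = |e (⟨T, Nat.lt_succ_self T⟩, s)| := by rw [hce s]
    have h0 : Δ 0 = ∑ s : S, ∑ a : A, |Lf 0 (s, a) - Lp 0 (s, a)| := by
      simp only [hΔdef]
      exact Fintype.sum_prod_type _
    rw [h0, Finset.sum_congr rfl (fun s _ => hper s)]
    exact hslice _
  have hstep : ∀ t, t < T → Δ (t+1) ≤ (Cp + 1) * Δ t + E := by
    intro t htT
    have htT' : t ≤ T := le_of_lt htT
    have ht1 : t + 1 ≤ T := htT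
    set q1 : S → ℝ := fun s => ∑ sa' : S × A, p t sa'.1 sa'.2 (Lf t) s * Lf t sa' with hq1def
    set q2 : S → ℝ := fun s => ∑ sa' : S × A, p t sa'.1 sa'.2 (Lp t) s * Lp t sa' with hq2def
    have hq1nn : ∀ s, 0 ≤ q1 s := by
      intro s
      simp only [hq1def]
      exact Finset.sum_nonneg fun sa' _ =>
        mul_nonneg ((hp t htT' sa'.1 sa'.2 (Lf t) (hLfS t htT')).1 s) ((hLfS t htT').1 sa')
    have hce : ∀ s : S, e (⟨t, by omega⟩, s) = q1 s - ∑ a : A, Lf (t+1) (s, a) := by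
      intro s
      simp only [hedef]
      rw [mulVec_AL_lt p Lf Lv (⟨t, by omega⟩, s) (by simpa using htT)]
      unfold bvec
      rw [if_neg (by simpa using Nat.ne_of_lt htT)]
      dsimp only
      rw [sub_zero]
      have h1 : ∑ sa : S × A, p t sa.1 sa.2 (Lf t) s * Lv (⟨t, by omega⟩, sa.1, sa.2) = q1 s := by
        simp only [hq1def]
        apply Finset.sum_congr rfl
        intro sa' _
        rw [hLv_eq t (by omega) sa'.1 sa'.2]
      have h2 : ∑ a : A, Lv (⟨t + 1, by omega⟩, s, a) = ∑ a : A, Lf (t+1) (s, a) :=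
        Finset.sum_congr rfl (fun a _ => hLv_eq (t+1) (by omega) s a)
      rw [h1, h2]
    have hper : ∀ s : S, ∑ a : A, |Lf (t+1) (s, a) - π (t+1) s a * q1 s|
        = |e (⟨t, by omega⟩, s)| := by
      intro s
      have h1 := ratio_abs_sum hπpol (t+1) s (f := fun a => Lf (t+1) (s, a))
        (fun a => (hLfS (t+1) ht1).1 (s, a)) (hq1nn s)
        (fun hpos a => hπratio (t+1) ht1 s a hpos)
      rw [h1, hce s, abs_sub_comm]
    have hLp1 : ∀ s a, Lp (t+1) (s, a) = π (t+1) s a * q2 s := fun s a => rfl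
    have htri : Δ (t+1) ≤ (∑ s : S, |e (⟨t, by omega⟩, s)|) + ∑ s : S, |q1 s - q2 s| := by
      have h1 : Δ (t+1) = ∑ s : S, ∑ a : A, |Lf (t+1) (s, a) - Lp (t+1) (s, a)| := by
        simp only [hΔdef]
        exact Fintype.sum_prod_type _
      rw [h1, ← Finset.sum_add_distrib]
      apply Finset.sum_le_sum
      intro s _
      have h2 : ∑ a : A, |π (t+1) s a * q1 s - Lp (t+1) (s, a)| = |q1 s - q2 s| := by
        have h3 : ∀ a : A, |π (t+1) s a * q1 s - Lp (t+1) (s, a)|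
            = π (t+1) s a * |q1 s - q2 s| := by
          intro a
          rw [hLp1 s a, ← mul_sub, abs_mul, abs_of_nonneg ((hπpol (t+1) s).1 a)]
        rw [Finset.sum_congr rfl (fun a _ => h3 a), ← Finset.sum_mul, (hπpol (t+1) s).2, one_mul]
      calc ∑ a : A, |Lf (t+1) (s, a) - Lp (t+1) (s, a)|
          ≤ ∑ a : A, (|Lf (t+1) (s, a) - π (t+1) s a * q1 s|
              + |π (t+1) s a * q1 s - Lp (t+1) (s, a)|) :=
            Finset.sum_le_sum fun a _ => abs_sub_le _ _ _
      _ = (∑ a : A, |Lf (t+1) (s, a) - π (t+1) s a * q1 s|)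
            + ∑ a : A, |π (t+1) s a * q1 s - Lp (t+1) (s, a)| := Finset.sum_add_distrib
      _ = |e (⟨t, by omega⟩, s)| + |q1 s - q2 s| := by rw [hper s, h2]
    have hqq : ∑ s : S, |q1 s - q2 s| ≤ (Cp + 1) * Δ t := by
      have h1 : ∀ s, |q1 s - q2 s| ≤
          (∑ sa' : S × A, |p t sa'.1 sa'.2 (Lf t) s - p t sa'.1 sa'.2 (Lp t) s| * Lf t sa')
          + ∑ sa' : S × A, p t sa'.1 sa'.2 (Lp t) s * |Lf t sa' - Lp t sa'| := by
        intro s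
        have hdec : q1 s - q2 s =
            (∑ sa' : S × A, (p t sa'.1 sa'.2 (Lf t) s - p t sa'.1 sa'.2 (Lp t) s) * Lf t sa')
            + ∑ sa' : S × A, p t sa'.1 sa'.2 (Lp t) s * (Lf t sa' - Lp t sa') := by
          simp only [hq1def, hq2def]
          rw [← Finset.sum_add_distrib, ← Finset.sum_sub_distrib]
          apply Finset.sum_congr rfl; intros; ring
        rw [hdec]
        apply le_trans (abs_add_le _ _)
        apply add_le_add
        · apply le_trans (Finset.abs_sum_le_sum_abs _ _)
          apply Finset.sum_le_sum; intro sa' _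
          rw [abs_mul, abs_of_nonneg ((hLfS t htT').1 sa')]
        · apply le_trans (Finset.abs_sum_le_sum_abs _ _)
          apply Finset.sum_le_sum; intro sa' _
          rw [abs_mul, abs_of_nonneg ((hp t htT' sa'.1 sa'.2 (Lp t) (hLpS t htT')).1 s)]
      have h2 : ∑ s : S, ∑ sa' : S × A,
          |p t sa'.1 sa'.2 (Lf t) s - p t sa'.1 sa'.2 (Lp t) s| * Lf t sa' ≤ Cp * Δ t := by
        rw [Finset.sum_comm]
        have h3 : ∀ sa' : S × A, ∑ s : S,
            |p t sa'.1 sa'.2 (Lf t) s - p t sa'.1 sa'.2 (Lp t) s| * Lf t sa'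
            ≤ ∑ s : S, |p t sa'.1 sa'.2 (Lf t) s - p t sa'.1 sa'.2 (Lp t) s| := by
          intro sa'
          rw [← Finset.sum_mul]
          calc (∑ s : S, |p t sa'.1 sa'.2 (Lf t) s - p t sa'.1 sa'.2 (Lp t) s|) * Lf t sa'
              ≤ (∑ s : S, |p t sa'.1 sa'.2 (Lf t) s - p t sa'.1 sa'.2 (Lp t) s|) * 1 := by
                apply mul_le_mul_of_nonneg_left (simplex_le_one (hLfS t htT') sa')
                exact Finset.sum_nonneg fun _ _ => abs_nonneg _
          _ = _ := mul_one _
        apply le_trans (Finset.sum_le_sum fun sa' _ => h3 sa')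
        exact (hlips t htT' (Lf t) (Lp t) (hLfS t htT') (hLpS t htT')).1
      have h4 : ∑ s : S, ∑ sa' : S × A,
          p t sa'.1 sa'.2 (Lp t) s * |Lf t sa' - Lp t sa'| = Δ t := by
        rw [Finset.sum_comm]
        have h5 : ∀ sa' : S × A, ∑ s : S, p t sa'.1 sa'.2 (Lp t) s * |Lf t sa' - Lp t sa'|
            = |Lf t sa' - Lp t sa'| := by
          intro sa'
          rw [← Finset.sum_mul, (hp t htT' sa'.1 sa'.2 (Lp t) (hLpS t htT')).2, one_mul]
        rw [Finset.sum_congr rfl (fun sa' _ => h5 sa')]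
        try rfl
      calc ∑ s : S, |q1 s - q2 s|
          ≤ ∑ s : S, ((∑ sa' : S × A, |p t sa'.1 sa'.2 (Lf t) s - p t sa'.1 sa'.2 (Lp t) s| * Lf t sa')
            + ∑ sa' : S × A, p t sa'.1 sa'.2 (Lp t) s * |Lf t sa' - Lp t sa'|) :=
            Finset.sum_le_sum fun s _ => h1 s
      _ = (∑ s : S, ∑ sa' : S × A, |p t sa'.1 sa'.2 (Lf t) s - p t sa'.1 sa'.2 (Lp t) s| * Lf t sa')
            + ∑ s : S, ∑ sa' : S × A, p t sa'.1 sa'.2 (Lp t) s * |Lf t sa' - Lp t sa'| :=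
          Finset.sum_add_distrib
      _ ≤ Cp * Δ t + Δ t := by
          rw [h4]
          exact add_le_add_left h2 _
      _ = (Cp + 1) * Δ t := by ring
    calc Δ (t+1) ≤ (∑ s : S, |e (⟨t, by omega⟩, s)|) + ∑ s : S, |q1 s - q2 s| := htri
    _ ≤ E + (Cp + 1) * Δ t := add_le_add (hslice ⟨t, by omega⟩) hqq
    _ = (Cp + 1) * Δ t + E := by ring
  have hK : (0:ℝ) ≤ ((Cp+1)^(T+2) - 2*Cp - 1) / Cp^2 := by
    apply div_nonneg _ (sq_nonneg Cp)
    have h1 := one_add_mul_le_pow (a := Cp) (by linarith) (T+2)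
    push_cast at h1
    have h2 : (1+Cp)^(T+2) = (Cp+1)^(T+2) := by ring_nf
    linarith [mul_nonneg hT0 hCp.le]
  have hαnn : 0 ≤ α := by
    rw [hα]
    apply mul_nonneg (mul_nonneg _ hK) (Real.sqrt_nonneg _)
    positivity
  have hηα : η ≤ ε * α := by
    have h1 : η ≤ E * (((Cp+1)^(T+2) - 2*Cp - 1) / Cp^2) := by
      rw [hηdef]
      exact geom_bound Cp E hCp hEnn T Δ hbase hstep
    have h2 : E ≤ Real.sqrt (Fintype.card S) * (ε / c2) := by
      rw [hEdef]
      exact mul_le_mul_of_nonneg_left hterm2 (Real.sqrt_nonneg _)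
    calc η ≤ E * (((Cp+1)^(T+2) - 2*Cp - 1) / Cp^2) := h1
    _ ≤ (Real.sqrt (Fintype.card S) * (ε / c2)) * (((Cp+1)^(T+2) - 2*Cp - 1) / Cp^2) :=
        mul_le_mul_of_nonneg_right h2 hK
    _ = ε * α := by
        rw [hα]
        field_simp
  -- cost discrepancy
  have hdotc : ∀ i, dot (cLmat T k c Lf i) Lv =
      ∑ t ∈ Finset.range (T+1), ∑ sa : S × A, c t sa.1 sa.2 (Lf t) i * Lf t sa := by
    intro i
    have h0 : Lv = toVec T Lf := (toVec_toFam Lv).symm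
    rw [h0]
    exact dot_as_sum (fun t sa => c t sa.1 sa.2 (Lf t) i) Lf
  have hCostLp : ∀ i, Cost T k μ0 p c π Lp i =
      ∑ t ∈ Finset.range (T+1), ∑ sa : S × A, c t sa.1 sa.2 (Lp t) i * Lp t sa := by
    intro i
    unfold Cost
    apply Finset.sum_congr rfl
    intro t _
    apply Finset.sum_congr rfl
    intro sa _
    rw [hψπ t]
  set D : Fin k → ℝ := fun i => dot (cLmat T k c Lf i) Lv - Cost T k μ0 p c π Lp i with hDdef
  have hDsum : ∑ i, |D i| ≤ ((k:ℝ) * cmax + Cc) * η := by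
    have hper : ∀ t, t ≤ T → ∑ i, |(∑ sa : S × A, c t sa.1 sa.2 (Lf t) i * Lf t sa)
        - ∑ sa : S × A, c t sa.1 sa.2 (Lp t) i * Lp t sa| ≤ ((k:ℝ)*cmax + Cc) * Δ t := by
      intro t ht
      have hi : ∀ i, |(∑ sa : S × A, c t sa.1 sa.2 (Lf t) i * Lf t sa)
          - ∑ sa : S × A, c t sa.1 sa.2 (Lp t) i * Lp t sa|
          ≤ cmax * Δ t + ∑ sa : S × A, |c t sa.1 sa.2 (Lf t) i - c t sa.1 sa.2 (Lp t) i| := by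
        intro i
        have hdec : (∑ sa : S × A, c t sa.1 sa.2 (Lf t) i * Lf t sa)
            - ∑ sa : S × A, c t sa.1 sa.2 (Lp t) i * Lp t sa
            = (∑ sa : S × A, c t sa.1 sa.2 (Lf t) i * (Lf t sa - Lp t sa))
              + ∑ sa : S × A, (c t sa.1 sa.2 (Lf t) i - c t sa.1 sa.2 (Lp t) i) * Lp t sa := by
          rw [← Finset.sum_add_distrib, ← Finset.sum_sub_distrib]
          apply Finset.sum_congr rfl; intros; ring
        rw [hdec]
        apply le_trans (abs_add_le _ _)
        apply add_le_add
        · apply le_trans (Finset.abs_sum_le_sum_abs _ _)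
          have h1 : ∀ sa : S × A, |c t sa.1 sa.2 (Lf t) i * (Lf t sa - Lp t sa)|
              ≤ cmax * |Lf t sa - Lp t sa| := by
            intro sa
            rw [abs_mul]
            apply mul_le_mul_of_nonneg_right _ (abs_nonneg _)
            rw [abs_of_nonneg ((hb t ht sa.1 sa.2 (Lf t) (hLfS t ht)).2 i).1]
            exact ((hb t ht sa.1 sa.2 (Lf t) (hLfS t ht)).2 i).2
          calc ∑ sa : S × A, |c t sa.1 sa.2 (Lf t) i * (Lf t sa - Lp t sa)|
              ≤ ∑ sa : S × A, cmax * |Lf t sa - Lp t sa| := Finset.sum_le_sum fun sa _ => h1 sa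
          _ = cmax * Δ t := by rw [← Finset.mul_sum]
        · apply le_trans (Finset.abs_sum_le_sum_abs _ _)
          apply Finset.sum_le_sum
          intro sa _
          rw [abs_mul, abs_of_nonneg ((hLpS t ht).1 sa)]
          calc |c t sa.1 sa.2 (Lf t) i - c t sa.1 sa.2 (Lp t) i| * Lp t sa
              ≤ |c t sa.1 sa.2 (Lf t) i - c t sa.1 sa.2 (Lp t) i| * 1 :=
                mul_le_mul_of_nonneg_left (simplex_le_one (hLpS t ht) sa) (abs_nonneg _)
          _ = _ := mul_one _
      have hsum2 : ∑ i, ∑ sa : S × A, |c t sa.1 sa.2 (Lf t) i - c t sa.1 sa.2 (Lp t) i|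
          ≤ Cc * Δ t := by
        rw [Finset.sum_comm]
        exact (hlips t ht (Lf t) (Lp t) (hLfS t ht) (hLpS t ht)).2.2
      calc ∑ i, |(∑ sa : S × A, c t sa.1 sa.2 (Lf t) i * Lf t sa)
          - ∑ sa : S × A, c t sa.1 sa.2 (Lp t) i * Lp t sa|
          ≤ ∑ i, (cmax * Δ t + ∑ sa : S × A, |c t sa.1 sa.2 (Lf t) i - c t sa.1 sa.2 (Lp t) i|) :=
            Finset.sum_le_sum fun i _ => hi i
      _ = (k:ℝ) * (cmax * Δ t) + ∑ i, ∑ sa : S × A, |c t sa.1 sa.2 (Lf t) i - c t sa.1 sa.2 (Lp t) i| := by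
            rw [Finset.sum_add_distrib, Finset.sum_const, Finset.card_univ, Fintype.card_fin,
              nsmul_eq_mul]
      _ ≤ (k:ℝ) * (cmax * Δ t) + Cc * Δ t := add_le_add_right hsum2 _
      _ = ((k:ℝ)*cmax + Cc) * Δ t := by ring
    have hDi : ∀ i, |D i| ≤ ∑ t ∈ Finset.range (T+1),
        |(∑ sa : S × A, c t sa.1 sa.2 (Lf t) i * Lf t sa)
          - ∑ sa : S × A, c t sa.1 sa.2 (Lp t) i * Lp t sa| := by
      intro i
      have h1 : D i = ∑ t ∈ Finset.range (T+1),
          ((∑ sa : S × A, c t sa.1 sa.2 (Lf t) i * Lf t sa)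
            - ∑ sa : S × A, c t sa.1 sa.2 (Lp t) i * Lp t sa) := by
        simp only [hDdef]
        rw [hdotc i, hCostLp i, ← Finset.sum_sub_distrib]
      rw [h1]
      exact Finset.abs_sum_le_sum_abs _ _
    calc ∑ i, |D i| ≤ ∑ i, ∑ t ∈ Finset.range (T+1),
        |(∑ sa : S × A, c t sa.1 sa.2 (Lf t) i * Lf t sa)
          - ∑ sa : S × A, c t sa.1 sa.2 (Lp t) i * Lp t sa| := Finset.sum_le_sum fun i _ => hDi i
    _ = ∑ t ∈ Finset.range (T+1), ∑ i,
        |(∑ sa : S × A, c t sa.1 sa.2 (Lf t) i * Lf t sa)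
          - ∑ sa : S × A, c t sa.1 sa.2 (Lp t) i * Lp t sa| := Finset.sum_comm
    _ ≤ ∑ t ∈ Finset.range (T+1), ((k:ℝ)*cmax + Cc) * Δ t := by
        apply Finset.sum_le_sum
        intro t ht
        exact hper t (Nat.lt_succ_iff.mp (Finset.mem_range.mp ht))
    _ = ((k:ℝ)*cmax + Cc) * η := by rw [hηdef, ← Finset.mul_sum]
  -- feasibility gap bound
  have hγC : ∀ i, γ0 i - Cost T k μ0 p c π Lp i = u4 i + w i + D i := by
    intro i
    simp only [hu4def, hDdef]
    ring
  have hGfea_ub : norm2 (fun i => min 0 (γ0 i - Cost T k μ0 p c π Lp i)) ≤ ε * ζ3 := by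
    have hm : ∀ i, |min 0 (γ0 i - Cost T k μ0 p c π Lp i)| ≤ |(|u4 i| + |D i|)| := by
      intro i
      rw [abs_of_nonneg (by positivity : (0:ℝ) ≤ |u4 i| + |D i|)]
      rcases le_or_gt 0 (γ0 i - Cost T k μ0 p c π Lp i) with h | h
      · rw [min_eq_left h, abs_zero]
        positivity
      · rw [min_eq_right h.le, abs_of_neg h]
        have h1 := (hw i).1
        have h2 := hγC i
        have h3 := le_abs_self (u4 i)
        have h4 := neg_abs_le (u4 i)
        have h5 := le_abs_self (D i)
        have h6 := neg_abs_le (D i)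
        linarith only [h1, h2, h3, h4, h5, h6]
    have hn1 : norm1 (fun i => |D i|) = ∑ i, |D i| := by
      unfold norm1
      exact Finset.sum_congr rfl (fun i _ => abs_abs (D i))
    calc norm2 (fun i => min 0 (γ0 i - Cost T k μ0 p c π Lp i))
        ≤ norm2 (fun i => |u4 i| + |D i|) := norm2_mono hm
    _ ≤ norm2 (fun i => |u4 i|) + norm2 (fun i => |D i|) := norm2_add_le _ _
    _ = norm2 u4 + norm2 (fun i => |D i|) := by rw [norm2_abs]
    _ ≤ ε/c4 + ∑ i, |D i| := add_le_add hterm4 (le_trans (norm2_le_norm1 _) (le_of_eq hn1))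
    _ ≤ ε/c4 + ((k:ℝ)*cmax + Cc) * η := add_le_add_right hDsum _
    _ ≤ ε * ζ3 := by
        have hx2 : ((k:ℝ)*cmax + Cc) * η ≤ ((k:ℝ)*cmax + Cc) * (ε*α) :=
          mul_le_mul_of_nonneg_left hηα (by linarith [hkcm, hCc.le])
        have hx3 : ((k:ℝ)*cmax + Cc) * (ε*α)
            ≤ ((k:ℝ)*cmax + Cc * (Fintype.card S : ℝ) * (Fintype.card A : ℝ) * ((T:ℝ)+1)) * (ε*α) := by
          apply mul_le_mul_of_nonneg_right _ (mul_nonneg hε hαnn)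
          have e0 : (1:ℝ) ≤ (Fintype.card S : ℝ) * (Fintype.card A : ℝ) := by
            nlinarith only [hS1, hA1]
          have e1 : (1:ℝ) ≤ (Fintype.card S : ℝ) * (Fintype.card A : ℝ) * ((T:ℝ)+1) := by
            nlinarith only [e0, hT0]
          have e2 : Cc * 1 ≤ Cc * ((Fintype.card S : ℝ) * (Fintype.card A : ℝ) * ((T:ℝ)+1)) :=
            mul_le_mul_of_nonneg_left e1 hCc.le
          linarith only [e2]
        have hfin : ε * ζ3 = ε/c4
            + ((k:ℝ)*cmax + Cc * (Fintype.card S : ℝ) * (Fintype.card A : ℝ) * ((T:ℝ)+1)) * (ε*α) := by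
          rw [hζ3]; ring
        linarith only [hx2, hx3, hfin]
  -- induced-flow vectors and difference bounds
  set Lhat : Fin (T+1) × S × A → ℝ := toVec T Lp with hLhatdef
  have hTV : toVec T (psi μ0 p π Lp) = Lhat := by
    funext x
    simp only [hLhatdef]
    unfold toVec
    rw [hψπ]
  have hALLhat : mulVec (ALmat T p Lp) Lhat = bvec T μ0 := by
    rw [← hTV]
    exact mulVec_AL_psi hπpol Lp
  have hLhat0 : ∀ x, 0 ≤ Lhat x := by
    intro x
    simp only [hLhatdef]
    exact (hLpS (x.1:ℕ) (Nat.lt_succ_iff.mp x.1.isLt)).1 _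
  have hLhat1 : ∀ x, Lhat x ≤ 1 := by
    intro x
    simp only [hLhatdef]
    exact simplex_le_one (hLpS (x.1:ℕ) (Nat.lt_succ_iff.mp x.1.isLt)) _
  have hLvx0 : ∀ x, 0 ≤ Lv x := hLv0
  have hLvx1 : ∀ x, Lv x ≤ 1 := by
    intro x
    have h1 := simplex_le_one (hLfS (x.1:ℕ) (Nat.lt_succ_iff.mp x.1.isLt)) (x.2.1, x.2.2)
    rw [hLfdef] at h1
    rwa [toFam_apply Lv x] at h1
  have hη_vec : ∑ x : Fin (T+1) × S × A, |Lv x - Lhat x| = η := by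
    have h1 : ∀ x : Fin (T+1) × S × A,
        |Lv x - Lhat x| = |Lf (x.1:ℕ) (x.2.1, x.2.2) - Lp (x.1:ℕ) (x.2.1, x.2.2)| := by
      intro x
      rw [← toFam_apply Lv x]
      rfl
    rw [Finset.sum_congr rfl (fun x _ => h1 x), hηdef]
    exact sum_fin_prod (fun t sa => |Lf t sa - Lp t sa|)
  have hMdiff : ∀ (v : Fin (T+1) × S × A → ℝ), (∀ x, 0 ≤ v x) → (∀ x, v x ≤ 1) →
      ∀ row : Fin (T+1) × S,
        |mulVec (ALmat T p Lf) v row - mulVec (ALmat T p Lp) v row| ≤ Cp * η := by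
    intro v hv0 hv1 row
    by_cases hrow : (row.1 : ℕ) < T
    · rw [mulVec_AL_lt p Lf v row hrow, mulVec_AL_lt p Lp v row hrow]
      have hT' : (row.1:ℕ) ≤ T := le_of_lt hrow
      have h1 : (∑ sa : S × A, p (row.1:ℕ) sa.1 sa.2 (Lf (row.1:ℕ)) row.2 * v (row.1, sa.1, sa.2))
          - (∑ a : A, v (⟨(row.1:ℕ)+1, by omega⟩, row.2, a))
          - ((∑ sa : S × A, p (row.1:ℕ) sa.1 sa.2 (Lp (row.1:ℕ)) row.2 * v (row.1, sa.1, sa.2))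
            - ∑ a : A, v (⟨(row.1:ℕ)+1, by omega⟩, row.2, a))
          = ∑ sa : S × A, (p (row.1:ℕ) sa.1 sa.2 (Lf (row.1:ℕ)) row.2
              - p (row.1:ℕ) sa.1 sa.2 (Lp (row.1:ℕ)) row.2) * v (row.1, sa.1, sa.2) := by
        have h2 : ∑ sa : S × A, (p (row.1:ℕ) sa.1 sa.2 (Lf (row.1:ℕ)) row.2
              - p (row.1:ℕ) sa.1 sa.2 (Lp (row.1:ℕ)) row.2) * v (row.1, sa.1, sa.2)
            = (∑ sa : S × A, p (row.1:ℕ) sa.1 sa.2 (Lf (row.1:ℕ)) row.2 * v (row.1, sa.1, sa.2))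
              - ∑ sa : S × A, p (row.1:ℕ) sa.1 sa.2 (Lp (row.1:ℕ)) row.2 * v (row.1, sa.1, sa.2) := by
          rw [← Finset.sum_sub_distrib]
          apply Finset.sum_congr rfl; intros; ring
        rw [h2]
        ring
      rw [h1]
      calc |∑ sa : S × A, (p (row.1:ℕ) sa.1 sa.2 (Lf (row.1:ℕ)) row.2
              - p (row.1:ℕ) sa.1 sa.2 (Lp (row.1:ℕ)) row.2) * v (row.1, sa.1, sa.2)|
          ≤ ∑ sa : S × A, |(p (row.1:ℕ) sa.1 sa.2 (Lf (row.1:ℕ)) row.2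
              - p (row.1:ℕ) sa.1 sa.2 (Lp (row.1:ℕ)) row.2) * v (row.1, sa.1, sa.2)| :=
            Finset.abs_sum_le_sum_abs _ _
      _ ≤ ∑ sa : S × A, |p (row.1:ℕ) sa.1 sa.2 (Lf (row.1:ℕ)) row.2
              - p (row.1:ℕ) sa.1 sa.2 (Lp (row.1:ℕ)) row.2| := by
            apply Finset.sum_le_sum
            intro sa _
            rw [abs_mul]
            calc |p (row.1:ℕ) sa.1 sa.2 (Lf (row.1:ℕ)) row.2
                - p (row.1:ℕ) sa.1 sa.2 (Lp (row.1:ℕ)) row.2| * |v (row.1, sa.1, sa.2)|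
                ≤ |p (row.1:ℕ) sa.1 sa.2 (Lf (row.1:ℕ)) row.2
                  - p (row.1:ℕ) sa.1 sa.2 (Lp (row.1:ℕ)) row.2| * 1 := by
                  apply mul_le_mul_of_nonneg_left _ (abs_nonneg _)
                  rw [abs_of_nonneg (hv0 _)]
                  exact hv1 _
            _ = _ := mul_one _
      _ ≤ ∑ sa : S × A, ∑ s' : S, |p (row.1:ℕ) sa.1 sa.2 (Lf (row.1:ℕ)) s'
              - p (row.1:ℕ) sa.1 sa.2 (Lp (row.1:ℕ)) s'| := by
            apply Finset.sum_le_sum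
            intro sa _
            exact Finset.single_le_sum (f := fun s' => |p (row.1:ℕ) sa.1 sa.2 (Lf (row.1:ℕ)) s'
              - p (row.1:ℕ) sa.1 sa.2 (Lp (row.1:ℕ)) s'|) (fun _ _ => abs_nonneg _)
              (Finset.mem_univ row.2)
      _ ≤ Cp * Δ (row.1:ℕ) :=
            (hlips (row.1:ℕ) hT' (Lf (row.1:ℕ)) (Lp (row.1:ℕ)) (hLfS _ hT') (hLpS _ hT')).1
      _ ≤ Cp * η := mul_le_mul_of_nonneg_left (hΔη _ hT') hCp.le
    · rw [mulVec_AL_last p Lf v row hrow, mulVec_AL_last p Lp v row hrow, sub_self, abs_zero]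
      exact mul_nonneg hCp.le hηnn
  have hβy_eq : yBound (Fintype.card S) T rmax cmax δ = βy := by rw [hβy]; rfl
  have hβz_eq : zBound (Fintype.card S) (Fintype.card A) T rmax cmax δ = βz := by rw [hβz]; rfl
  have hβynn : 0 ≤ βy := le_trans (norm1_nn y) (hβy_eq ▸ hy)
  have hβznn : 0 ≤ βz := le_trans (norm1_nn z) (hβz_eq ▸ hz1)
  have hzsup : ∀ x, z x ≤ βz := by
    intro x
    calc z x ≤ |z x| := le_abs_self _
    _ ≤ norm1 z := abs_le_norm1 z x
    _ ≤ βz := hβz_eq ▸ hz1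
  set lamB : ℝ := ((T:ℝ)+1) * rmax / δ with hlamBdef
  have hlamB_eq : lamBound T rmax δ = lamB := by rw [hlamBdef]; rfl
  have hlamBnn : 0 ≤ lamB := by
    rw [hlamBdef]
    apply div_nonneg (mul_nonneg (by positivity) hrmax) hδ.le
  have hlami : ∀ i, 0 ≤ lam i ∧ lam i ≤ lamB :=
    fun i => ⟨(hlam i).1, hlamB_eq ▸ (hlam i).2⟩
  have hydiff : ∀ (v : Fin (T+1) × S × A → ℝ), (∀ x, 0 ≤ v x) → (∀ x, v x ≤ 1) →
      |dot y (mulVec (ALmat T p Lf) v) - dot y (mulVec (ALmat T p Lp) v)| ≤ βy * (Cp * η) := by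
    intro v hv0 hv1
    have h1 : dot y (mulVec (ALmat T p Lf) v) - dot y (mulVec (ALmat T p Lp) v)
        = ∑ row, y row * (mulVec (ALmat T p Lf) v row - mulVec (ALmat T p Lp) v row) := by
      unfold dot
      rw [← Finset.sum_sub_distrib]
      apply Finset.sum_congr rfl; intros; ring
    rw [h1]
    calc |∑ row, y row * (mulVec (ALmat T p Lf) v row - mulVec (ALmat T p Lp) v row)|
        ≤ ∑ row, |y row * (mulVec (ALmat T p Lf) v row - mulVec (ALmat T p Lp) v row)| :=
          Finset.abs_sum_le_sum_abs _ _
    _ ≤ ∑ row, |y row| * (Cp * η) := by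
        apply Finset.sum_le_sum
        intro row _
        rw [abs_mul]
        exact mul_le_mul_of_nonneg_left (hMdiff v hv0 hv1 row) (abs_nonneg _)
    _ = norm1 y * (Cp * η) := by rw [← Finset.sum_mul]; rfl
    _ ≤ βy * (Cp * η) := by
        apply mul_le_mul_of_nonneg_right _ (mul_nonneg hCp.le hηnn)
        exact le_trans hy (le_of_eq hβy_eq)
  have hrdiff : ∀ (v : Fin (T+1) × S × A → ℝ), (∀ x, 0 ≤ v x) → (∀ x, v x ≤ 1) →
      |dot (rLvec T r Lf) v - dot (rLvec T r Lp) v| ≤ Cr * η := by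
    intro v hv0 hv1
    have h1 : dot (rLvec T r Lf) v - dot (rLvec T r Lp) v
        = ∑ x, (rLvec T r Lf x - rLvec T r Lp x) * v x := by
      unfold dot
      rw [← Finset.sum_sub_distrib]
      apply Finset.sum_congr rfl; intros; ring
    rw [h1]
    calc |∑ x, (rLvec T r Lf x - rLvec T r Lp x) * v x|
        ≤ ∑ x, |(rLvec T r Lf x - rLvec T r Lp x) * v x| := Finset.abs_sum_le_sum_abs _ _
    _ ≤ ∑ x, |rLvec T r Lf x - rLvec T r Lp x| := by
        apply Finset.sum_le_sum
        intro x _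
        rw [abs_mul]
        calc |rLvec T r Lf x - rLvec T r Lp x| * |v x|
            ≤ |rLvec T r Lf x - rLvec T r Lp x| * 1 := by
              apply mul_le_mul_of_nonneg_left _ (abs_nonneg _)
              rw [abs_of_nonneg (hv0 x)]
              exact hv1 x
        _ = _ := mul_one _
    _ = ∑ t ∈ Finset.range (T+1), ∑ sa : S × A,
          |r t sa.1 sa.2 (Lf t) - r t sa.1 sa.2 (Lp t)| :=
        sum_fin_prod (fun t sa => |r t sa.1 sa.2 (Lf t) - r t sa.1 sa.2 (Lp t)|)
    _ ≤ ∑ t ∈ Finset.range (T+1), Cr * Δ t := by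
        apply Finset.sum_le_sum
        intro t ht
        have ht' : t ≤ T := Nat.lt_succ_iff.mp (Finset.mem_range.mp ht)
        exact (hlips t ht' (Lf t) (Lp t) (hLfS t ht') (hLpS t ht')).2.1
    _ = Cr * η := by rw [hηdef, ← Finset.mul_sum]
  have hcdiff : ∀ (v : Fin (T+1) × S × A → ℝ), (∀ x, 0 ≤ v x) → (∀ x, v x ≤ 1) →
      ∀ i : Fin k, |dot (cLmat T k c Lf i) v - dot (cLmat T k c Lp i) v| ≤ Cc * η := by
    intro v hv0 hv1 i
    have h1 : dot (cLmat T k c Lf i) v - dot (cLmat T k c Lp i) v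
        = ∑ x, (cLmat T k c Lf i x - cLmat T k c Lp i x) * v x := by
      unfold dot
      rw [← Finset.sum_sub_distrib]
      apply Finset.sum_congr rfl; intros; ring
    rw [h1]
    calc |∑ x, (cLmat T k c Lf i x - cLmat T k c Lp i x) * v x|
        ≤ ∑ x, |(cLmat T k c Lf i x - cLmat T k c Lp i x) * v x| := Finset.abs_sum_le_sum_abs _ _
    _ ≤ ∑ x, |cLmat T k c Lf i x - cLmat T k c Lp i x| := by
        apply Finset.sum_le_sum
        intro x _
        rw [abs_mul]
        calc |cLmat T k c Lf i x - cLmat T k c Lp i x| * |v x|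
            ≤ |cLmat T k c Lf i x - cLmat T k c Lp i x| * 1 := by
              apply mul_le_mul_of_nonneg_left _ (abs_nonneg _)
              rw [abs_of_nonneg (hv0 x)]
              exact hv1 x
        _ = _ := mul_one _
    _ ≤ ∑ x : Fin (T+1) × S × A, ∑ i' : Fin k,
          |cLmat T k c Lf i' x - cLmat T k c Lp i' x| := by
        apply Finset.sum_le_sum
        intro x _
        exact Finset.single_le_sum (f := fun i' => |cLmat T k c Lf i' x - cLmat T k c Lp i' x|)
          (fun _ _ => abs_nonneg _) (Finset.mem_univ i)
    _ = ∑ t ∈ Finset.range (T+1), ∑ sa : S × A, ∑ i' : Fin k,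
          |c t sa.1 sa.2 (Lf t) i' - c t sa.1 sa.2 (Lp t) i'| :=
        sum_fin_prod (fun t sa => ∑ i' : Fin k, |c t sa.1 sa.2 (Lf t) i' - c t sa.1 sa.2 (Lp t) i'|)
    _ ≤ ∑ t ∈ Finset.range (T+1), Cc * Δ t := by
        apply Finset.sum_le_sum
        intro t ht
        have ht' : t ≤ T := Nat.lt_succ_iff.mp (Finset.mem_range.mp ht)
        exact (hlips t ht' (Lf t) (Lp t) (hLfS t ht') (hLpS t ht')).2.2
    _ = Cc * η := by rw [hηdef, ← Finset.mul_sum]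
  have hVeq : V T μ0 p r π Lp = dot (rLvec T r Lp) Lhat := by
    rw [V_eq_dot, hTV]
  -- key estimate for any feasible policy
  have hkey : ∀ π', IsPolicy π' → (∀ i, Cost T k μ0 p c π' Lp i ≤ γ0 i) →
      V T μ0 p r π' Lp ≤ V T μ0 p r π Lp + ε * (((T:ℝ)+2)*ζ1 + ζ2 + ζ4) := by
    intro π' hπ' hfe'
    set d' : Fin (T+1) × S × A → ℝ := toVec T (psi μ0 p π' Lp) with hd'def
    have hψ'S : ∀ t, t ≤ T → IsSimplex (psi μ0 p π' Lp t) := psi_simplex hp hπ' hμ0 hLpS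
    have hd'0 : ∀ x, 0 ≤ d' x := by
      intro x
      simp only [hd'def]
      exact (hψ'S (x.1:ℕ) (Nat.lt_succ_iff.mp x.1.isLt)).1 _
    have hd'1 : ∀ x, d' x ≤ 1 := by
      intro x
      simp only [hd'def]
      exact simplex_le_one (hψ'S (x.1:ℕ) (Nat.lt_succ_iff.mp x.1.isLt)) _
    have hALd' : mulVec (ALmat T p Lp) d' = bvec T μ0 := mulVec_AL_psi hπ' Lp
    have hV' : V T μ0 p r π' Lp = dot (rLvec T r Lp) d' := V_eq_dot μ0 p r π' Lp
    have hexp1 := dot_station (ALmat T p Lf) (rLvec T r Lf) z (cLmat T k c Lf) y lam d'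
    have hexp2 := dot_station (ALmat T p Lf) (rLvec T r Lf) z (cLmat T k c Lf) y lam Lhat
    rw [← hgdef] at hexp1 hexp2
    -- g term
    have hgd : |dot g d' - dot g Lhat| ≤ (ε/c1) * ((T:ℝ)+2) := by
      have h1 : dot g d' - dot g Lhat = dot g (fun x => d' x - Lhat x) := by
        unfold dot
        rw [← Finset.sum_sub_distrib]
        apply Finset.sum_congr rfl; intros; ring
      rw [h1]
      have hsum1 : ∑ x : Fin (T+1) × S × A, d' x = (T:ℝ)+1 := by
        have h2 : ∑ x : Fin (T+1) × S × A, d' x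
            = ∑ t ∈ Finset.range (T+1), ∑ sa : S × A, psi μ0 p π' Lp t sa :=
          sum_fin_prod (fun t sa => psi μ0 p π' Lp t sa)
        rw [h2, Finset.sum_congr rfl (fun t ht =>
          (hψ'S t (Nat.lt_succ_iff.mp (Finset.mem_range.mp ht))).2)]
        rw [Finset.sum_const, Finset.card_range, nsmul_eq_mul, mul_one]
        push_cast; ring
      have hsum2 : ∑ x : Fin (T+1) × S × A, Lhat x = (T:ℝ)+1 := by
        have h2 : ∑ x : Fin (T+1) × S × A, Lhat x
            = ∑ t ∈ Finset.range (T+1), ∑ sa : S × A, Lp t sa :=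
          sum_fin_prod (fun t sa => Lp t sa)
        rw [h2, Finset.sum_congr rfl (fun t ht =>
          (hLpS t (Nat.lt_succ_iff.mp (Finset.mem_range.mp ht))).2)]
        rw [Finset.sum_const, Finset.card_range, nsmul_eq_mul, mul_one]
        push_cast; ring
      have h2 : norm2 (fun x => d' x - Lhat x) ≤ (T:ℝ)+2 := by
        have hsq : ∑ x : Fin (T+1) × S × A, (d' x - Lhat x)^2 ≤ ((T:ℝ)+2)^2 := by
          have h3 : ∀ x : Fin (T+1) × S × A, (d' x - Lhat x)^2 ≤ d' x + Lhat x := by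
            intro x
            have hb1 : |d' x - Lhat x| ≤ 1 := by
              rw [abs_le]
              constructor
              · linarith [hd'0 x, hLhat1 x]
              · linarith [hd'1 x, hLhat0 x]
            have hb2 : |d' x - Lhat x| ≤ d' x + Lhat x := by
              rw [abs_le]
              constructor
              · linarith [hd'0 x, hLhat0 x, hd'1 x, hLhat1 x]
              · linarith [hd'0 x, hLhat0 x, hd'1 x, hLhat1 x]
            calc (d' x - Lhat x)^2 = |d' x - Lhat x| * |d' x - Lhat x| := by
                  rw [← abs_mul, abs_of_nonneg (mul_self_nonneg _), sq]
            _ ≤ 1 * (d' x + Lhat x) := by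
                  apply mul_le_mul hb1 hb2 (abs_nonneg _)
                  norm_num
            _ = d' x + Lhat x := one_mul _
          calc ∑ x : Fin (T+1) × S × A, (d' x - Lhat x)^2
              ≤ ∑ x : Fin (T+1) × S × A, (d' x + Lhat x) := Finset.sum_le_sum fun x _ => h3 x
          _ = ((T:ℝ)+1) + ((T:ℝ)+1) := by rw [Finset.sum_add_distrib, hsum1, hsum2]
          _ ≤ ((T:ℝ)+2)^2 := by nlinarith only [hT0]
        calc norm2 (fun x => d' x - Lhat x) ≤ Real.sqrt (((T:ℝ)+2)^2) := Real.sqrt_le_sqrt hsq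
        _ = (T:ℝ)+2 := Real.sqrt_sq (by positivity)
      calc |dot g (fun x => d' x - Lhat x)|
          ≤ norm2 g * norm2 (fun x => d' x - Lhat x) := abs_dot_le _ _
      _ ≤ (ε/c1) * ((T:ℝ)+2) :=
          mul_le_mul hterm1 h2 (norm2_nn _) (div_nonneg hε hc1.le)
    -- y terms
    have hyd1 : |dot y (mulVec (ALmat T p Lf) d') - dot y (bvec T μ0)| ≤ βy * (Cp*η) := by
      have h1 := hydiff d' hd'0 hd'1
      rwa [hALd'] at h1
    have hyd2 : |dot y (mulVec (ALmat T p Lf) Lhat) - dot y (bvec T μ0)| ≤ βy * (Cp*η) := by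
      have h1 := hydiff Lhat hLhat0 hLhat1
      rwa [hALLhat] at h1
    -- z terms
    have hzd' : 0 ≤ dot z d' := Finset.sum_nonneg fun x _ => mul_nonneg (hz0 x) (hd'0 x)
    have hzLhat : dot z Lhat ≤ ε/c3 + βz * η := by
      have h1 : dot z Lhat - dot z Lv = ∑ x, z x * (Lhat x - Lv x) := by
        unfold dot
        rw [← Finset.sum_sub_distrib]
        apply Finset.sum_congr rfl; intros; ring
      have h2 : ∑ x, z x * (Lhat x - Lv x) ≤ βz * η := by
        have hx : ∀ x, z x * (Lhat x - Lv x) ≤ βz * |Lv x - Lhat x| := by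
          intro x
          have a1 : z x * (Lhat x - Lv x) ≤ z x * |Lhat x - Lv x| :=
            mul_le_mul_of_nonneg_left (le_abs_self _) (hz0 x)
          have a2 : z x * |Lhat x - Lv x| ≤ βz * |Lhat x - Lv x| :=
            mul_le_mul_of_nonneg_right (hzsup x) (abs_nonneg _)
          have a3 : βz * |Lhat x - Lv x| = βz * |Lv x - Lhat x| := by rw [abs_sub_comm]
          linarith only [a1, a2, a3]
        calc ∑ x, z x * (Lhat x - Lv x) ≤ ∑ x, βz * |Lv x - Lhat x| :=
          Finset.sum_le_sum fun x _ => hx x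
        _ = βz * η := by rw [← Finset.mul_sum, hη_vec]
      linarith only [hterm3, h1, h2]
    -- c terms
    have hcd' : ∑ i, lam i * dot (cLmat T k c Lf i) d'
        ≤ (∑ i, lam i * γ0 i) + (k:ℝ)*(lamB*(Cc*η)) := by
      have h1 : ∀ i, dot (cLmat T k c Lf i) d' ≤ γ0 i + Cc*η := by
        intro i
        have ha := le_trans (le_abs_self _) (hcdiff d' hd'0 hd'1 i)
        have hb2 : dot (cLmat T k c Lp i) d' ≤ γ0 i := by
          have h2 : Cost T k μ0 p c π' Lp i = dot (cLmat T k c Lp i) d' :=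
            Cost_eq_dot μ0 p c π' Lp i
          rw [← h2]
          exact hfe' i
        linarith only [ha, hb2]
      calc ∑ i, lam i * dot (cLmat T k c Lf i) d'
          ≤ ∑ i, lam i * (γ0 i + Cc*η) := by
            apply Finset.sum_le_sum
            intro i _
            exact mul_le_mul_of_nonneg_left (h1 i) (hlami i).1
      _ = (∑ i, lam i * γ0 i) + ∑ i, lam i * (Cc*η) := by
          rw [← Finset.sum_add_distrib]
          apply Finset.sum_congr rfl; intros; ring
      _ ≤ (∑ i, lam i * γ0 i) + (k:ℝ)*(lamB*(Cc*η)) := by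
          have h2 : ∑ i, lam i * (Cc*η) ≤ ∑ _i : Fin k, lamB * (Cc*η) := by
            apply Finset.sum_le_sum
            intro i _
            exact mul_le_mul_of_nonneg_right (hlami i).2 (mul_nonneg hCc.le hηnn)
          rw [Finset.sum_const, Finset.card_univ, Fintype.card_fin, nsmul_eq_mul] at h2
          linarith only [h2]
    have hcLhat : (∑ i, lam i * γ0 i) - ε/c5 - (k:ℝ)*(lamB*(cmax*η))
        ≤ ∑ i, lam i * dot (cLmat T k c Lf i) Lhat := by
      have h1 : ∀ i, dot (cLmat T k c Lf i) Lv - dot (cLmat T k c Lf i) Lhat ≤ cmax * η := by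
        intro i
        have hdec : dot (cLmat T k c Lf i) Lv - dot (cLmat T k c Lf i) Lhat
            = ∑ x, cLmat T k c Lf i x * (Lv x - Lhat x) := by
          unfold dot
          rw [← Finset.sum_sub_distrib]
          apply Finset.sum_congr rfl; intros; ring
        rw [hdec]
        have hx : ∀ x, cLmat T k c Lf i x * (Lv x - Lhat x) ≤ cmax * |Lv x - Lhat x| := by
          intro x
          have hcb := (hb (x.1:ℕ) (Nat.lt_succ_iff.mp x.1.isLt) x.2.1 x.2.2 (Lf (x.1:ℕ))
            (hLfS _ (Nat.lt_succ_iff.mp x.1.isLt))).2 i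
          have a1 : cLmat T k c Lf i x * (Lv x - Lhat x)
              ≤ cLmat T k c Lf i x * |Lv x - Lhat x| :=
            mul_le_mul_of_nonneg_left (le_abs_self _) hcb.1
          have a2 : cLmat T k c Lf i x * |Lv x - Lhat x| ≤ cmax * |Lv x - Lhat x| :=
            mul_le_mul_of_nonneg_right hcb.2 (abs_nonneg _)
          linarith only [a1, a2]
        calc ∑ x, cLmat T k c Lf i x * (Lv x - Lhat x)
            ≤ ∑ x, cmax * |Lv x - Lhat x| := Finset.sum_le_sum fun x _ => hx x
        _ = cmax * η := by rw [← Finset.mul_sum, hη_vec]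
      have h2 : ∀ i, lam i * dot (cLmat T k c Lf i) Lv - lam i * (cmax*η)
          ≤ lam i * dot (cLmat T k c Lf i) Lhat := by
        intro i
        have h3 := mul_le_mul_of_nonneg_left (h1 i) (hlami i).1
        nlinarith only [h3]
      have h4 : (∑ i, lam i * γ0 i) - (∑ i, lam i * dot (cLmat T k c Lf i) Lv) ≤ ε/c5 := by
        have h5 : ∑ i, lam i * (γ0 i - dot (cLmat T k c Lf i) Lv)
            = (∑ i, lam i * γ0 i) - ∑ i, lam i * dot (cLmat T k c Lf i) Lv := by
          rw [← Finset.sum_sub_distrib]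
          apply Finset.sum_congr rfl; intros; ring
        have h6 := le_trans (le_abs_self _) hterm5
        linarith only [h5, h6]
      have h7 : ∑ i, (lam i * dot (cLmat T k c Lf i) Lv - lam i * (cmax*η))
          ≤ ∑ i, lam i * dot (cLmat T k c Lf i) Lhat := Finset.sum_le_sum fun i _ => h2 i
      rw [Finset.sum_sub_distrib] at h7
      have h8 : ∑ i, lam i * (cmax*η) ≤ (k:ℝ)*(lamB*(cmax*η)) := by
        rcases Nat.eq_zero_or_pos k with hk | hk
        · subst hk
          simp
        · have hcm := hcmax_if hk
          have h9 : ∑ i, lam i * (cmax*η) ≤ ∑ _i : Fin k, lamB * (cmax*η) := by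
            apply Finset.sum_le_sum
            intro i _
            exact mul_le_mul_of_nonneg_right (hlami i).2 (mul_nonneg hcm hηnn)
          rw [Finset.sum_const, Finset.card_univ, Fintype.card_fin, nsmul_eq_mul] at h9
          linarith only [h9]
      linarith only [h4, h7, h8]
    -- r-Lipschitz terms
    have hr1 := hrdiff d' hd'0 hd'1
    have hr2 := hrdiff Lhat hLhat0 hLhat1
    have e1 : dot (rLvec T r Lp) d' ≤ dot (rLvec T r Lf) d' + Cr*η := by
      have := (abs_le.mp hr1).1
      linarith only [this]
    have e2 : dot (rLvec T r Lf) Lhat ≤ dot (rLvec T r Lp) Lhat + Cr*η := by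
      have := (abs_le.mp hr2).2
      linarith only [this]
    have hga : dot g d' ≤ dot g Lhat + (ε/c1) * ((T:ℝ)+2) := by
      have := (abs_le.mp hgd).2
      linarith only [this]
    have hy1a : dot y (bvec T μ0) - βy*(Cp*η) ≤ dot y (mulVec (ALmat T p Lf) d') := by
      have := (abs_le.mp hyd1).1
      linarith only [this]
    have hy2a : dot y (mulVec (ALmat T p Lf) Lhat) ≤ dot y (bvec T μ0) + βy*(Cp*η) := by
      have := (abs_le.mp hyd2).2
      linarith only [this]
    -- numeric bound
    have hkk1 : 0 ≤ (k:ℝ)*((k:ℝ)-1)*cmax := by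
      rcases Nat.eq_zero_or_pos k with hk | hk
      · subst hk; simp
      · have hk1 : (1:ℝ) ≤ (k:ℝ) := by exact_mod_cast hk
        have hcm := hcmax_if hk
        have h2 : 0 ≤ ((k:ℝ)-1)*cmax := mul_nonneg (by linarith only [hk1]) hcm
        have h3 : (0:ℝ) ≤ (k:ℝ) := by positivity
        nlinarith only [h2, h3, mul_nonneg h3 h2]
    have hnum : (ε/c1)*((T:ℝ)+2) + 2*(Cr*η) + 2*(βy*(Cp*η)) + (ε/c3 + βz*η) + ε/c5
        + (k:ℝ)*(lamB*(Cc*η)) + (k:ℝ)*(lamB*(cmax*η))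
        ≤ ε * (((T:ℝ)+2)*ζ1 + ζ2 + ζ4) := by
      have hM1 : η * (2*Cr + 2*(βy*Cp) + βz + (k:ℝ)*(lamB*Cc) + (k:ℝ)*(lamB*cmax))
          ≤ (ε*α) * (((T:ℝ)+2)*(Cp*βy + Cr + (k:ℝ)*(Cc*lamB)) + βz
            + (k:ℝ)*lamB*((k:ℝ)*cmax + Cc*(Fintype.card S : ℝ)*(Fintype.card A : ℝ)*((T:ℝ)+1))) := by
        have hM1nn : 0 ≤ 2*Cr + 2*(βy*Cp) + βz + (k:ℝ)*(lamB*Cc) + (k:ℝ)*(lamB*cmax) := by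
          have f1 : 0 ≤ (k:ℝ)*(lamB*Cc) := by positivity
          have f2 : 0 ≤ (k:ℝ)*(lamB*cmax) := by
            rcases Nat.eq_zero_or_pos k with hk | hk
            · subst hk; simp
            · have := hcmax_if hk
              positivity
          have f3 : 0 ≤ βy*Cp := mul_nonneg hβynn hCp.le
          linarith only [hCr.le, f3, hβznn, f1, f2]
        have hMle : 2*Cr + 2*(βy*Cp) + βz + (k:ℝ)*(lamB*Cc) + (k:ℝ)*(lamB*cmax)
            ≤ ((T:ℝ)+2)*(Cp*βy + Cr + (k:ℝ)*(Cc*lamB)) + βz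
              + (k:ℝ)*lamB*((k:ℝ)*cmax + Cc*(Fintype.card S : ℝ)*(Fintype.card A : ℝ)*((T:ℝ)+1)) := by
          have f1 : 0 ≤ (T:ℝ)*(Cp*βy) := mul_nonneg hT0 (mul_nonneg hCp.le hβynn)
          have f2 : 0 ≤ (T:ℝ)*Cr := mul_nonneg hT0 hCr.le
          have f3 : 0 ≤ ((T:ℝ)+1)*((k:ℝ)*(Cc*lamB)) := by positivity
          have f4 : 0 ≤ ((k:ℝ)*((k:ℝ)-1)*cmax)*lamB := mul_nonneg hkk1 hlamBnn
          have f5 : 0 ≤ (k:ℝ)*(lamB*(Cc*(Fintype.card S : ℝ)*(Fintype.card A : ℝ)*((T:ℝ)+1))) := by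
            positivity
          nlinarith only [f1, f2, f3, f4, f5]
        calc η * (2*Cr + 2*(βy*Cp) + βz + (k:ℝ)*(lamB*Cc) + (k:ℝ)*(lamB*cmax))
            ≤ (ε*α) * (2*Cr + 2*(βy*Cp) + βz + (k:ℝ)*(lamB*Cc) + (k:ℝ)*(lamB*cmax)) :=
              mul_le_mul_of_nonneg_right hηα hM1nn
        _ ≤ (ε*α) * (((T:ℝ)+2)*(Cp*βy + Cr + (k:ℝ)*(Cc*lamB)) + βz
              + (k:ℝ)*lamB*((k:ℝ)*cmax + Cc*(Fintype.card S : ℝ)*(Fintype.card A : ℝ)*((T:ℝ)+1))) :=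
              mul_le_mul_of_nonneg_left hMle (mul_nonneg hε hαnn)
      have hfin : ε * (((T:ℝ)+2)*ζ1 + ζ2 + ζ4)
          = ε*((T:ℝ)+2)/c1 + ε/c3 + ε/c5
            + (ε*α) * (((T:ℝ)+2)*(Cp*βy + Cr + (k:ℝ)*(Cc*lamB)) + βz
              + (k:ℝ)*lamB*((k:ℝ)*cmax + Cc*(Fintype.card S : ℝ)*(Fintype.card A : ℝ)*((T:ℝ)+1))) := by
        rw [hζ1, hζ2, hζ4, hlamBdef]
        field_simp
        ring
      have hlhs : (ε/c1)*((T:ℝ)+2) + 2*(Cr*η) + 2*(βy*(Cp*η)) + (ε/c3 + βz*η) + ε/c5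
          + (k:ℝ)*(lamB*(Cc*η)) + (k:ℝ)*(lamB*(cmax*η))
          = ε*((T:ℝ)+2)/c1 + ε/c3 + ε/c5
            + η * (2*Cr + 2*(βy*Cp) + βz + (k:ℝ)*(lamB*Cc) + (k:ℝ)*(lamB*cmax)) := by
        ring
      linarith only [hM1, hfin, hlhs]
    -- final assembly
    rw [hV', hVeq]
    linarith only [e1, e2, hga, hy1a, hy2a, hzd', hzLhat, hcd', hcLhat, hexp1, hexp2, hnum]
  -- the feasible-value set
  set VS : Set ℝ := {v | ∃ π', IsPolicy π' ∧ (∀ i, Cost T k μ0 p c π' Lp i ≤ γ0 i)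
      ∧ v = V T μ0 p r π' Lp} with hVSdef
  have hVS_bdd : BddAbove VS := by
    refine ⟨((T:ℝ)+1)*rmax, ?_⟩
    rintro v ⟨π', h1, _, rfl⟩
    exact (V_bounds hb hLpS (psi_simplex hp h1 hμ0 hLpS)).2
  have hVstar : Vstar T k μ0 p r c γ0 Lp = sSup VS := by rw [hVSdef]; rfl
  -- patched flow for strict feasibility
  set L2 : ℕ → S × A → ℝ := fun t =>
    if t ≤ T then Lp t else (fun _ => ((Fintype.card (S × A) : ℝ))⁻¹) with hL2def
  have hL2eq : ∀ t, t ≤ T → L2 t = Lp t := by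
    intro t ht
    simp only [hL2def, if_pos ht]
  have hL2flow : IsFlow L2 := by
    intro t
    by_cases h : t ≤ T
    · rw [hL2eq t h]; exact hLpS t h
    · simp only [hL2def, if_neg h]; exact hunif
  have hCtransfer : ∀ (π'' : ℕ → S → A → ℝ) (j : Fin k),
      Cost T k μ0 p c π'' L2 j = Cost T k μ0 p c π'' Lp j := by
    intro π'' j
    unfold Cost
    apply Finset.sum_congr rfl
    intro t ht
    have ht' : t ≤ T := Nat.lt_succ_iff.mp (Finset.mem_range.mp ht)
    rw [hL2eq t ht', psi_congr μ0 p π'' t (fun u hu => hL2eq u (by omega))]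
  have hne : VS.Nonempty := by
    rcases Nat.eq_zero_or_pos k with hk | hk
    · exact ⟨V T μ0 p r π Lp, π, hπpol, fun i => (Fin.elim0 (hk ▸ i)), rfl⟩
    · obtain ⟨πf, hπf, hπfc, _⟩ := hstrict L2 hL2flow ⟨0, hk⟩
      exact ⟨V T μ0 p r πf Lp, πf, hπf, fun j => by rw [← hCtransfer πf j]; exact hπfc j, rfl⟩
  have hGopt_ub : Gopt T k μ0 p r c γ0 π ≤ ε * (((T:ℝ)+2)*ζ1 + ζ2 + ζ4) := by
    unfold Gopt
    rw [← hLpdef, hVstar]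
    have h1 : sSup VS ≤ V T μ0 p r π Lp + ε * (((T:ℝ)+2)*ζ1 + ζ2 + ζ4) := by
      apply csSup_le hne
      rintro v ⟨π', h2, h3, rfl⟩
      exact hkey π' h2 h3
    linarith only [h1]
  have hζ3nn : 0 ≤ ζ3 := by
    rw [hζ3]
    have h1 : 0 ≤ (k:ℝ)*cmax + Cc * (Fintype.card S : ℝ) * (Fintype.card A : ℝ) * ((T:ℝ)+1) := by
      have h2 : 0 ≤ Cc * (Fintype.card S : ℝ) * (Fintype.card A : ℝ) * ((T:ℝ)+1) := by positivity
      linarith only [hkcm, h2]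
    have h3 : 0 ≤ α * ((k:ℝ)*cmax + Cc * (Fintype.card S : ℝ) * (Fintype.card A : ℝ) * ((T:ℝ)+1)) :=
      mul_nonneg hαnn h1
    have h4 : (0:ℝ) ≤ 1/c4 := by positivity
    linarith only [h3, h4]
  have hGfea_eq : Gfea T k μ0 p c γ0 π
      = norm2 (fun i => min 0 (γ0 i - Cost T k μ0 p c π Lp i)) := by
    unfold Gfea
    rw [← hLpdef]
  -- lower bound on the optimality gap
  have hGopt_lb : -(ε * Real.sqrt (k:ℝ) * (((T:ℝ)+1) * rmax / δ) * ζ3)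
      ≤ Gopt T k μ0 p r c γ0 π := by
    set vv : Fin k → ℝ := fun i => max 0 (Cost T k μ0 p c π Lp i - γ0 i) with hvvdef
    set Sv : ℝ := ∑ i, vv i with hSvdef
    have hvv0 : ∀ i, 0 ≤ vv i := by
      intro i; simp only [hvvdef]; exact le_max_left _ _
    have hSv0 : 0 ≤ Sv := Finset.sum_nonneg fun i _ => hvv0 i
    have hv_abs : ∀ i, vv i = |min 0 (γ0 i - Cost T k μ0 p c π Lp i)| := by
      intro i
      simp only [hvvdef]
      rcases le_total (Cost T k μ0 p c π Lp i) (γ0 i) with h | h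
      · rw [max_eq_left (by linarith), min_eq_left (by linarith), abs_zero]
      · rw [max_eq_right (by linarith), min_eq_right (by linarith),
          abs_of_nonpos (by linarith)]
        ring
    have hSvk : Sv ≤ Real.sqrt (k:ℝ) * norm2 (fun i => min 0 (γ0 i - Cost T k μ0 p c π Lp i)) := by
      rw [hSvdef, Finset.sum_congr rfl (fun i _ => hv_abs i)]
      have h1 := sum_abs_le_sqrt_card (fun i => min 0 (γ0 i - Cost T k μ0 p c π Lp i))
      rwa [Fintype.card_fin] at h1
    have hSvb : Sv ≤ Real.sqrt (k:ℝ) * (ε * ζ3) :=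
      le_trans hSvk (mul_le_mul_of_nonneg_left hGfea_ub (Real.sqrt_nonneg _))
    have hRHS0 : 0 ≤ ε * Real.sqrt (k:ℝ) * (((T:ℝ)+1) * rmax / δ) * ζ3 := by
      apply mul_nonneg (mul_nonneg (mul_nonneg hε (Real.sqrt_nonneg _)) _) hζ3nn
      exact div_nonneg (mul_nonneg (by positivity) hrmax) hδ.le
    rcases eq_or_lt_of_le hSv0 with hSveq | hSvpos
    · -- π itself is feasible
      have hfe : ∀ i, Cost T k μ0 p c π Lp i ≤ γ0 i := by
        intro i
        have h0 : ∀ j ∈ Finset.univ, (0:ℝ) ≤ vv j := fun j _ => hvv0 j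
        have h1 := (Finset.sum_eq_zero_iff_of_nonneg h0).mp hSveq.symm i (Finset.mem_univ i)
        simp only [hvvdef] at h1
        by_contra hcon
        push_neg at hcon
        rw [max_eq_right (by linarith)] at h1
        linarith
      have hmem : V T μ0 p r π Lp ∈ VS := ⟨π, hπpol, hfe, rfl⟩
      have hle := le_csSup hVS_bdd hmem
      unfold Gopt
      rw [← hLpdef, hVstar]
      linarith only [hle, hRHS0]
    · -- mixing with strictly feasible policies
      choose πs hπs1 hπsc hπss using hstrict L2 hL2flow
      set ds : Fin k → Fin (T+1) × S × A → ℝ := fun i => toVec T (psi μ0 p (πs i) Lp) with hdsdef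
      have hdsb : ∀ i, mulVec (ALmat T p Lp) (ds i) = bvec T μ0 :=
        fun i => mulVec_AL_psi (hπs1 i) Lp
      have hds0 : ∀ i x, 0 ≤ ds i x := by
        intro i x
        simp only [hdsdef]
        exact (psi_simplex hp (hπs1 i) hμ0 hLpS (x.1:ℕ) (Nat.lt_succ_iff.mp x.1.isLt)).1 _
      have hdsc : ∀ i j, dot (cLmat T k c Lp j) (ds i) ≤ γ0 j := by
        intro i j
        have h1 : Cost T k μ0 p c (πs i) Lp j = dot (cLmat T k c Lp j) (ds i) :=
          Cost_eq_dot μ0 p c (πs i) Lp j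
        rw [← h1, ← hCtransfer (πs i) j]
        exact hπsc i j
      have hdss : ∀ i, dot (cLmat T k c Lp i) (ds i) ≤ γ0 i - δ := by
        intro i
        have h1 : Cost T k μ0 p c (πs i) Lp i = dot (cLmat T k c Lp i) (ds i) :=
          Cost_eq_dot μ0 p c (πs i) Lp i
        rw [← h1, ← hCtransfer (πs i) i]
        exact hπss i
      set θ : ℝ := min 1 (Sv/δ) with hθdef
      have hθ0 : 0 ≤ θ := le_min zero_le_one (div_nonneg hSv0 hδ.le)
      have hθ1 : θ ≤ 1 := min_le_left _ _
      have hθS : θ ≤ Sv/δ := min_le_right _ _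
      set dθ : Fin (T+1) × S × A → ℝ :=
        fun x => (1-θ) * Lhat x + θ * ∑ i, (vv i / Sv) * ds i x with hdθdef
      have hw_nn : ∀ i, 0 ≤ vv i / Sv := fun i => div_nonneg (hvv0 i) hSv0
      have hwsum : ∑ i, vv i / Sv = 1 := by
        rw [← Finset.sum_div, ← hSvdef, div_self (ne_of_gt hSvpos)]
      have hdθ0 : ∀ x, 0 ≤ dθ x := by
        intro x
        simp only [hdθdef]
        apply add_nonneg
        · exact mul_nonneg (by linarith only [hθ1]) (hLhat0 x)
        · apply mul_nonneg hθ0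
          apply Finset.sum_nonneg
          intro i _
          exact mul_nonneg (hw_nn i) (hds0 i x)
      have hdθb : mulVec (ALmat T p Lp) dθ = bvec T μ0 := by
        funext row
        have h1 : mulVec (ALmat T p Lp) dθ row
            = (1-θ) * mulVec (ALmat T p Lp) Lhat row
              + θ * ∑ i, (vv i / Sv) * mulVec (ALmat T p Lp) (ds i) row :=
          sum_comb (ALmat T p Lp row) (1-θ) θ Lhat (fun i => vv i / Sv) (fun i => ds i)
        have h2 : ∀ i, (vv i / Sv) * mulVec (ALmat T p Lp) (ds i) row
            = (vv i / Sv) * bvec T μ0 row := by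
          intro i; rw [hdsb i]
        rw [h1, hALLhat, Finset.sum_congr rfl (fun i _ => h2 i), ← Finset.sum_mul, hwsum]
        ring
      have hdotLhat_cost : ∀ j, dot (cLmat T k c Lp j) Lhat = Cost T k μ0 p c π Lp j := by
        intro j
        have h1 : Cost T k μ0 p c π Lp j
            = dot (cLmat T k c Lp j) (toVec T (psi μ0 p π Lp)) := Cost_eq_dot μ0 p c π Lp j
        rw [hTV] at h1
        exact h1.symm
      have hcostθ : ∀ j, dot (cLmat T k c Lp j) dθ ≤ γ0 j := by
        intro j
        have h1 : dot (cLmat T k c Lp j) dθ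
            = (1-θ) * dot (cLmat T k c Lp j) Lhat
              + θ * ∑ i, (vv i / Sv) * dot (cLmat T k c Lp j) (ds i) :=
          sum_comb (cLmat T k c Lp j) (1-θ) θ Lhat (fun i => vv i / Sv) (fun i => ds i)
        rw [h1, hdotLhat_cost j]
        have h2 : ∑ i, (vv i / Sv) * dot (cLmat T k c Lp j) (ds i)
            ≤ γ0 j - δ * (vv j / Sv) := by
          have h3 : ∀ i, (vv i / Sv) * dot (cLmat T k c Lp j) (ds i)
              ≤ (vv i / Sv) * γ0 j - (if i = j then δ * (vv j / Sv) else 0) := by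
            intro i
            by_cases hij : i = j
            · subst hij
              rw [if_pos rfl]
              have h4 := mul_le_mul_of_nonneg_left (hdss i) (hw_nn i)
              nlinarith only [h4]
            · rw [if_neg hij, sub_zero]
              exact mul_le_mul_of_nonneg_left (hdsc i j) (hw_nn i)
          calc ∑ i, (vv i / Sv) * dot (cLmat T k c Lp j) (ds i)
              ≤ ∑ i, ((vv i / Sv) * γ0 j - if i = j then δ * (vv j / Sv) else 0) :=
                Finset.sum_le_sum fun i _ => h3 i
          _ = (∑ i, (vv i / Sv)) * γ0 j - δ * (vv j / Sv) := by
              rw [Finset.sum_sub_distrib, ← Finset.sum_mul,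
                Finset.sum_ite_eq' Finset.univ j (fun _ => δ * (vv j / Sv))]
              simp
          _ = γ0 j - δ * (vv j / Sv) := by rw [hwsum, one_mul]
        have hCv : Cost T k μ0 p c π Lp j ≤ γ0 j + vv j := by
          have := le_max_right 0 (Cost T k μ0 p c π Lp j - γ0 j)
          simp only [hvvdef]
          linarith only [this]
        have h5 : (1-θ) * vv j ≤ θ * (δ * (vv j / Sv)) := by
          rcases le_or_gt (Sv/δ) 1 with hc | hc
          · have hθeq : θ = Sv/δ := by rw [hθdef]; exact min_eq_right hc
            rw [hθeq]
            have h6 : (Sv/δ) * (δ * (vv j / Sv)) = vv j := by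
              field_simp
            rw [h6]
            have h7 : 0 ≤ (Sv/δ) * vv j := mul_nonneg (div_nonneg hSv0 hδ.le) (hvv0 j)
            nlinarith only [h7]
          · have hθeq : θ = 1 := by rw [hθdef]; exact min_eq_left hc.le
            rw [hθeq]
            have h7 : 0 ≤ δ * (vv j / Sv) := mul_nonneg hδ.le (hw_nn j)
            nlinarith only [h7]
        have h8 := mul_le_mul_of_nonneg_left hCv (by linarith only [hθ1] : (0:ℝ) ≤ 1-θ)
        have h9 := mul_le_mul_of_nonneg_left h2 hθ0
        nlinarith only [h5, h8, h9]
      -- the mixed occupation measure is realized by a policy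
      have hψθ : toVec T (psi μ0 p (polOf T dθ) Lp) = dθ := by
        funext x
        show psi μ0 p (polOf T dθ) Lp (x.1:ℕ) (x.2.1, x.2.2) = dθ x
        rw [polOf_psi hdθb hdθ0 (x.1:ℕ) (Nat.lt_succ_iff.mp x.1.isLt)]
        exact toFam_apply dθ x
      have hmemθ : dot (rLvec T r Lp) dθ ∈ VS := by
        refine ⟨polOf T dθ, polOf_policy hdθ0, ?_, ?_⟩
        · intro i
          rw [Cost_eq_dot μ0 p c (polOf T dθ) Lp i, hψθ]
          exact hcostθ i
        · rw [V_eq_dot μ0 p r (polOf T dθ) Lp, hψθ]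
      have hsup := le_csSup hVS_bdd hmemθ
      have hvalθ : dot (rLvec T r Lp) dθ
          = (1-θ) * dot (rLvec T r Lp) Lhat
            + θ * ∑ i, (vv i / Sv) * dot (rLvec T r Lp) (ds i) :=
        sum_comb (rLvec T r Lp) (1-θ) θ Lhat (fun i => vv i / Sv) (fun i => ds i)
      have hrpos : ∀ i, 0 ≤ dot (rLvec T r Lp) (ds i) := by
        intro i
        apply Finset.sum_nonneg
        intro x _
        apply mul_nonneg
        · exact (hb (x.1:ℕ) (Nat.lt_succ_iff.mp x.1.isLt) x.2.1 x.2.2 (Lp (x.1:ℕ))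
            (hLpS _ (Nat.lt_succ_iff.mp x.1.isLt))).1.1
        · exact hds0 i x
      have hrLhat_ub : dot (rLvec T r Lp) Lhat ≤ ((T:ℝ)+1) * rmax := by
        rw [← hVeq]
        exact (V_bounds hb hLpS (fun t ht => by rw [hψπ t]; exact hLpS t ht)).2
      have hgap : dot (rLvec T r Lp) Lhat - dot (rLvec T r Lp) dθ ≤ θ * (((T:ℝ)+1)*rmax) := by
        rw [hvalθ]
        have h1 : 0 ≤ ∑ i, (vv i / Sv) * dot (rLvec T r Lp) (ds i) :=
          Finset.sum_nonneg fun i _ => mul_nonneg (hw_nn i) (hrpos i)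
        have h2 := mul_le_mul_of_nonneg_left hrLhat_ub hθ0
        have h3 := mul_nonneg hθ0 h1
        nlinarith only [h2, h3]
      have hθb : θ * (((T:ℝ)+1)*rmax) ≤ (Sv/δ) * (((T:ℝ)+1)*rmax) :=
        mul_le_mul_of_nonneg_right hθS (mul_nonneg (by positivity) hrmax)
      have hfinal : (Sv/δ) * (((T:ℝ)+1)*rmax)
          ≤ ε * Real.sqrt (k:ℝ) * (((T:ℝ)+1) * rmax / δ) * ζ3 := by
        have h1 : (Sv/δ) * (((T:ℝ)+1)*rmax)
            ≤ ((Real.sqrt (k:ℝ) * (ε*ζ3))/δ) * (((T:ℝ)+1)*rmax) := by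
          apply mul_le_mul_of_nonneg_right _ (mul_nonneg (by positivity) hrmax)
          exact div_le_div_of_nonneg_right hSvb hδ.le
        calc (Sv/δ) * (((T:ℝ)+1)*rmax)
            ≤ ((Real.sqrt (k:ℝ) * (ε*ζ3))/δ) * (((T:ℝ)+1)*rmax) := h1
        _ = ε * Real.sqrt (k:ℝ) * (((T:ℝ)+1) * rmax / δ) * ζ3 := by
            field_simp
      unfold Gopt
      rw [← hLpdef, hVstar, hVeq]
      linarith only [hsup, hgap, hθb, hfinal]
  -- final assembly
  refine ⟨⟨hGopt_lb, hGopt_ub⟩, ?_, ?_⟩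
  · rw [hGfea_eq]
    exact norm2_nn _
  · rw [hGfea_eq]
    exact hGfea_ub


end CMFG
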